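/- arXiv:0806.1212 — 9 statements merged into one kernel-verified Lean document; each statement's English description precedes it below -/
import Mathlib

section
/- Let K be a category with all equalizers and (N ⊣ R) an adjunction with N : K → C, unit η and counit ε. Then the pair (Id_K, η) is the equalizer of the parallel natural transformations RNη and ηRN : RN → RNRN if and only if η is a regular monomorphism in the functor category (equivalently, each component ηA is a regular monomorphism in K). -/
/-!
Only the naturality of `η : 𝟭 ⟶ T` (here `T = RN`) matters. If `η` is the equalizer of some pair
`f, g`, then any `s` with `s ≫ Tη = s ≫ ηT` also equalizes `f, g`: after composing with the mono
components of `η`, naturality turns `s ≫ f ≫ η` into `s ≫ ηT ≫ T f = s ≫ T (η ≫ f)`, and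
`η ≫ f = η ≫ g`. So `η` is also the equalizer of `Tη` and `ηT`.
-/

open CategoryTheory CategoryTheory.Limits

namespace CategoryTheory

variable {C : Type*} [Category C]

def RegularMono.isLimitFork {X Y Z : C} {ι : X ⟶ Y} (hι : RegularMono ι) {u v : Y ⟶ Z}
    (w : ι ≫ u = ι ≫ v)
    (h : ∀ {W : C} (k : W ⟶ Y), k ≫ u = k ≫ v → k ≫ hι.left = k ≫ hι.right) :
    IsLimit (Fork.ofι ι w) :=
  have := hι.mono
  Fork.IsLimit.mk' _ fun s =>
    let l := hι.lift' s.ι (h s.ι s.condition)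
    ⟨l.1, l.2, fun hm => (cancel_mono ι).mp (hm.trans l.2.symm)⟩

lemma NatTrans.mono_app_of_regularMono {D : Type*} [Category D] [HasEqualizers C] {F G : D ⥤ C}
    {f : F ⟶ G} (hf : RegularMono f) (d : D) : Mono (f.app d) :=
  mono_of_isLimit_fork (isLimitForkMapOfIsLimit ((evaluation D C).obj d) hf.w hf.isLimit)

lemma NatTrans.comp_eq_comp_of_comp_map_app_eq {T : C ⥤ C} (η : 𝟭 C ⟶ T) {W X Y : C}
    {s : W ⟶ T.obj X} (hs : s ≫ T.map (η.app X) = s ≫ η.app (T.obj X)) {f g : T.obj X ⟶ Y}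
    (hfg : η.app X ≫ f = η.app X ≫ g) [Mono (η.app Y)] : s ≫ f = s ≫ g := by
  have key (h : T.obj X ⟶ Y) : s ≫ h ≫ η.app Y = s ≫ T.map (η.app X ≫ h) := by
    rw [T.map_comp, reassoc_of% hs]
    exact congrArg (s ≫ ·) (η.naturality h)
  rw [← cancel_mono (η.app Y), Category.assoc, Category.assoc, key, key, hfg]

theorem NatTrans.nonempty_isLimit_fork_iff_nonempty_regularMono [HasEqualizers C] {T : C ⥤ C}
    (η : 𝟭 C ⟶ T) (w : η ≫ Functor.whiskerRight η T = η ≫ Functor.whiskerLeft T η) :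
    Nonempty (IsLimit (Fork.ofι η w)) ↔ Nonempty (RegularMono η) := by
  refine ⟨fun ⟨h⟩ => ⟨Fork.IsLimit.regularMono h⟩, fun ⟨h⟩ => ⟨h.isLimitFork w fun k hk => ?_⟩⟩
  ext X
  have := NatTrans.mono_app_of_regularMono h (h.Z.obj X)
  exact comp_eq_comp_of_comp_map_app_eq η (by simpa using congr_app hk X) (congr_app h.w X)

end CategoryTheory

/-- For an adjunction `N ⊣ R` with `K` having equalizers, `(Id_K, η)` is the equalizer of
`RNη` and `ηRN` if and only if `η` is a regular monomorphism in the functor category. -/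
theorem stmt4 {K C : Type*} [Category K] [Category C] [HasEqualizers K]
    (N : K ⥤ C) (R : C ⥤ K) (adj : N ⊣ R) :
    Nonempty (IsLimit (Fork.ofι adj.unit
      (show adj.unit ≫
          (Functor.whiskerRight adj.unit (N ⋙ R) : N ⋙ R ⟶ (N ⋙ R) ⋙ N ⋙ R) =
        adj.unit ≫
          (Functor.whiskerLeft (N ⋙ R) adj.unit : N ⋙ R ⟶ (N ⋙ R) ⋙ N ⋙ R) by
        ext X
        simp only [NatTrans.comp_app, Functor.whiskerRight_app, Functor.whiskerLeft_app]
        exact (adj.unit.naturality (adj.unit.app X)).symm))) ↔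
    Nonempty (RegularMono adj.unit) := by
  exact NatTrans.nonempty_isLimit_fork_iff_nonempty_regularMono adj.unit _
end

section
/- Consider a serially commutative 3×3 diagram in a category K, with rows A → B ⇉ C, A' → B' ⇉ C', A'' → B'' ⇉ C'' and columns A → A' ⇉ A'', B → B' ⇉ B'', C → C' ⇉ C''. If all three columns are equalizers and the second and third rows are equalizers, then the first row is an equalizer. -/
/-!
All three columns are monomorphisms, being equalizers, and so are the rows `i'`, `i''`; hence `i` is
mono as well, since `i ≫ e' = e ≫ i'`. If `x` equalizes `f, g`, then `x ≫ e'` equalizes `f', g'`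
and factors as `t ≫ i'`; since `i''` is mono, `t` equalizes `n, m` and factors as `u ≫ e`; and
`u ≫ i = x` because both agree after the mono `e'`.
-/

open CategoryTheory CategoryTheory.Limits

namespace CategoryTheory

variable {K : Type*} [Category K]

theorem comp_eq_comp_iff_of_comm_sq {B C B' C' : K} {h : B ⟶ B'} {k : C ⟶ C'} [Mono k]
    {p q : B ⟶ C} {p' q' : B' ⟶ C'} (hp : p ≫ k = h ≫ p') (hq : q ≫ k = h ≫ q') {X : K}
    (x : X ⟶ B) :
    x ≫ p = x ≫ q ↔ x ≫ h ≫ p' = x ≫ h ≫ q' := by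
  rw [← hp, ← hq, ← cancel_mono k]
  simp only [Category.assoc]

theorem Limits.Fork.nonempty_isLimit_ofι_of_exists_lift {P X Y : K} {f g : X ⟶ Y} (ι : P ⟶ X)
    [Mono ι] (w : ι ≫ f = ι ≫ g) (lift : ∀ {W : K} (x : W ⟶ X), x ≫ f = x ≫ g → ∃ l, l ≫ ι = x) :
    Nonempty (IsLimit (Fork.ofι ι w)) := by
  refine ⟨Fork.IsLimit.ofExistsUnique fun s => ?_⟩
  obtain ⟨l, hl⟩ := lift s.ι s.condition
  exact ⟨l, hl, fun m hm => (cancel_mono ι).1 (hm.trans hl.symm)⟩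

end CategoryTheory

theorem stmt5_general {K : Type*} [Category K]
    {A B C A' B' C' A'' B'' C'' : K}
    -- rows
    (i : A ⟶ B) (f g : B ⟶ C)
    (i' : A' ⟶ B') (f' g' : B' ⟶ C')
    (i'' : A'' ⟶ B'') (f'' g'' : B'' ⟶ C'')
    -- columns
    (e : A ⟶ A') (n m : A' ⟶ A'')
    (e' : B ⟶ B') (n' m' : B' ⟶ B'')
    (e'' : C ⟶ C') (n'' m'' : C' ⟶ C'')
    -- serial commutativity
    (sq1 : i ≫ e' = e ≫ i')
    (sq2f : f ≫ e'' = e' ≫ f') (sq2g : g ≫ e'' = e' ≫ g')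
    (sq3n : i' ≫ n' = n ≫ i'') (sq3m : i' ≫ m' = m ≫ i'')
    -- columns are equalizers
    (we : e ≫ n = e ≫ m) (he : IsLimit (Fork.ofι e we))
    (we' : e' ≫ n' = e' ≫ m') (he' : IsLimit (Fork.ofι e' we'))
    (we'' : e'' ≫ n'' = e'' ≫ m'') (he'' : IsLimit (Fork.ofι e'' we''))
    -- the second and third rows are equalizers
    (wi' : i' ≫ f' = i' ≫ g') (hi' : IsLimit (Fork.ofι i' wi'))
    (wi'' : i'' ≫ f'' = i'' ≫ g'') (hi'' : IsLimit (Fork.ofι i'' wi'')) :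
    ∃ wi : i ≫ f = i ≫ g, Nonempty (IsLimit (Fork.ofι i wi)) := by
  have : Mono e := Fork.IsLimit.mono he
  have : Mono i' := Fork.IsLimit.mono hi'
  have : Mono e' := Fork.IsLimit.mono he'
  have : Mono e'' := Fork.IsLimit.mono he''
  have : Mono i'' := Fork.IsLimit.mono hi''
  have : Mono i := mono_of_mono_fac sq1
  have row_iff {X : K} (x : X ⟶ B) := comp_eq_comp_iff_of_comm_sq sq2f sq2g x
  have col_iff {X : K} (t : X ⟶ A') := comp_eq_comp_iff_of_comm_sq sq3n.symm sq3m.symm t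
  have wi : i ≫ f = i ≫ g := (row_iff i).2 (by simp only [reassoc_of% sq1, wi'])
  refine ⟨wi, Fork.nonempty_isLimit_ofι_of_exists_lift i wi fun x hx => ?_⟩
  obtain ⟨t, ht : t ≫ i' = x ≫ e'⟩ :=
    Fork.IsLimit.lift' hi' (x ≫ e') (by simpa using (row_iff x).1 hx)
  obtain ⟨u, hu : u ≫ e = t⟩ :=
    Fork.IsLimit.lift' he t ((col_iff t).2 (by simp only [reassoc_of% ht, we']))
  exact ⟨u, (cancel_mono e').1 (by rw [Category.assoc, sq1, reassoc_of% hu, ht])⟩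

/-- A 3×3 lemma for equalizers: in a serially commutative diagram whose columns are equalizers
and whose second and third rows are equalizers, the first row is an equalizer. -/
theorem stmt5 {K : Type*} [Category K]
    {A B C A' B' C' A'' B'' C'' : K}
    -- rows
    (i : A ⟶ B) (f g : B ⟶ C)
    (i' : A' ⟶ B') (f' g' : B' ⟶ C')
    (i'' : A'' ⟶ B'') (f'' g'' : B'' ⟶ C'')
    -- columns
    (e : A ⟶ A') (n m : A' ⟶ A'')
    (e' : B ⟶ B') (n' m' : B' ⟶ B'')
    (e'' : C ⟶ C') (n'' m'' : C' ⟶ C'')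
    -- serial commutativity
    (sq1 : i ≫ e' = e ≫ i')
    (sq2f : f ≫ e'' = e' ≫ f') (sq2g : g ≫ e'' = e' ≫ g')
    (sq3n : i' ≫ n' = n ≫ i'') (sq3m : i' ≫ m' = m ≫ i'')
    (sq4fn : f' ≫ n'' = n' ≫ f'') (sq4gn : g' ≫ n'' = n' ≫ g'')
    (sq4fm : f' ≫ m'' = m' ≫ f'') (sq4gm : g' ≫ m'' = m' ≫ g'')
    -- columns are equalizers
    (we : e ≫ n = e ≫ m) (he : IsLimit (Fork.ofι e we))
    (we' : e' ≫ n' = e' ≫ m') (he' : IsLimit (Fork.ofι e' we'))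
    (we'' : e'' ≫ n'' = e'' ≫ m'') (he'' : IsLimit (Fork.ofι e'' we''))
    -- the second and third rows are equalizers
    (wi' : i' ≫ f' = i' ≫ g') (hi' : IsLimit (Fork.ofι i' wi'))
    (wi'' : i'' ≫ f'' = i'' ≫ g'') (hi'' : IsLimit (Fork.ofι i'' wi'')) :
    ∃ wi : i ≫ f = i ≫ g, Nonempty (IsLimit (Fork.ofι i wi)) :=
  stmt5_general i f g i' f' g' i'' f'' g'' e n m e' n' m' e'' n'' m'' sq1 sq2f sq2g sq3n sq3m we he
    we' he' we'' he'' wi' hi' wi'' hi''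
end

section
/- Let G, G' : C → K be functors and γ, θ : G → G' natural transformations, where K has all equalizers, and let (E, i) be the equalizer of γ and θ in the functor category. If G and G' both preserve equalizers, then the functor E preserves equalizers. -/
/-!
Let `ι : P ⟶ X` be an equalizer of `f, g : X ⟶ Y`. A fork `t` on `E.map f, E.map g`, followed
by `i.app X`, equalizes `G.map f, G.map g` and so lifts to `v` through the equalizer `G.map ι`.
Checking after the mono `G'.map ι`, naturality of `γ, θ` shows `v` equalizes `γ.app P, θ.app P`,
so `v` lifts through the equalizer `i.app P`; this is the required lift, unique because
`i.app P ≫ G.map ι` is mono.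
-/

open CategoryTheory CategoryTheory.Limits

section PointwiseEqualizer

variable {C K : Type*} [Category C] [Category K] {G G' E : C ⥤ K} {γ θ : G ⟶ G'} {i : E ⟶ G}

def isLimitForkMapOfPointwiseEqualizer (w : i ≫ γ = i ≫ θ)
    (hi : ∀ Z, IsLimit (Fork.ofι (i.app Z) (congr_app w Z) : Fork (γ.app Z) (θ.app Z)))
    {X Y P : C} {f g : X ⟶ Y} {ι : P ⟶ X} (h : ι ≫ f = ι ≫ g)
    (hG : IsLimit (Fork.ofι (G.map ι) (by simp only [← G.map_comp, h]) :
      Fork (G.map f) (G.map g)))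
    [Mono (G'.map ι)] :
    IsLimit (Fork.ofι (E.map ι) (by simp only [← E.map_comp, h]) : Fork (E.map f) (E.map g)) := by
  have : Mono (i.app X) := mono_of_isLimit_fork (hi X)
  have : Mono (i.app P) := mono_of_isLimit_fork (hi P)
  have : Mono (G.map ι) := mono_of_isLimit_fork hG
  refine Fork.IsLimit.mk' _ fun t => ?_
  obtain ⟨v, hv : v ≫ G.map ι = t.ι ≫ i.app X⟩ := Fork.IsLimit.lift' hG (t.ι ≫ i.app X) (by
    rw [Category.assoc, Category.assoc, ← i.naturality, ← i.naturality, t.condition_assoc])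
  have hwX : i.app X ≫ γ.app X = i.app X ≫ θ.app X := congr_app w X
  have hvγθ : v ≫ γ.app P = v ≫ θ.app P := by
    rw [← cancel_mono (G'.map ι), Category.assoc, Category.assoc, ← γ.naturality,
      ← θ.naturality, reassoc_of% hv, reassoc_of% hv, hwX]
  obtain ⟨l, hl : l ≫ i.app P = v⟩ := Fork.IsLimit.lift' (hi P) v hvγθ
  refine ⟨l, ?_, fun {m} hm => ?_⟩
  · rw [← cancel_mono (i.app X), Fork.ι_ofι, Category.assoc, i.naturality, reassoc_of% hl, hv]
  · rw [← cancel_mono (i.app P), hl, ← cancel_mono (G.map ι), hv, Category.assoc,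
      ← i.naturality, ← Category.assoc]
    exact congrArg (· ≫ i.app X) hm

theorem preservesLimit_parallelPair_of_pointwiseEqualizer (w : i ≫ γ = i ≫ θ)
    (hi : ∀ Z, IsLimit (Fork.ofι (i.app Z) (congr_app w Z) : Fork (γ.app Z) (θ.app Z)))
    {X Y : C} (f g : X ⟶ Y) [PreservesLimit (parallelPair f g) G]
    [PreservesLimit (parallelPair f g) G'] : PreservesLimit (parallelPair f g) E where
  preserves {c} hc := by
    have hc : IsLimit (Fork.ofι (Fork.ι c) (Fork.condition c)) :=
      hc.ofIsoLimit (Fork.isoForkOfι c)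
    have : Mono (G'.map (Fork.ι c)) := mono_of_isLimit_fork (isLimitForkMapOfIsLimit G' _ hc)
    have hEc := isLimitForkMapOfPointwiseEqualizer w hi (Fork.condition c)
      (isLimitForkMapOfIsLimit G _ hc)
    exact ⟨((isLimitMapConeForkEquiv E _).symm hEc).ofIsoLimit
      ((Cone.functoriality _ E).mapIso (Fork.isoForkOfι c).symm)⟩

end PointwiseEqualizer

/-- If `G` and `G'` preserve equalizers, then the (pointwise) equalizer `E` of a pair of
natural transformations `γ, θ : G ⟶ G'` preserves equalizers. -/
theorem stmt6 {C K : Type*} [Category C] [Category K] [HasEqualizers K]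
    (G G' : C ⥤ K) (γ θ : G ⟶ G')
    [PreservesLimitsOfShape WalkingParallelPair G]
    [PreservesLimitsOfShape WalkingParallelPair G']
    (E : C ⥤ K) (i : E ⟶ G) (w : i ≫ γ = i ≫ θ)
    (hE : IsLimit (Fork.ofι i w)) :
    Nonempty (PreservesLimitsOfShape WalkingParallelPair E) := by
  have hi (Z : C) := isLimitForkMapOfIsLimit ((evaluation C K).obj Z) w hE
  refine ⟨⟨fun {F} => ?_⟩⟩
  have := preservesLimit_parallelPair_of_pointwiseEqualizer w hi
    (F.map WalkingParallelPairHom.left) (F.map WalkingParallelPairHom.right)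
  exact preservesLimit_of_iso_diagram E (diagramIsoParallelPair F).symm
end

section
/- Let K be a category with coequalizers, α : A → T a morphism of monads on K such that both underlying endofunctors A and T preserve coequalizers. Let (N_A ⊣ R_A) be the canonical adjunction induced by α. Then the Eilenberg–Moore comparison functor K_T → (K_A)_{R_A N_A} is an isomorphism of categories. -/
/-!
An algebra `(Y, a)` for the monad `R_A N_A` carries the `T`-action
`T Y ⟶ T (N_A Y) ⟶ N_A Y ⟶ Y` (unit, action of `N_A Y`, then `a`). The adjunction identities
show that `a` becomes a `T`-algebra map `N_A Y ⟶ Y` and that restricting this action along `α`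
gives back the `A`-action of `Y`; hence `a` is the transpose of the identity, i.e. the counit at
the new `T`-algebra, and the construction is strictly inverse to the comparison functor.
-/

open CategoryTheory CategoryTheory.Limits

namespace CategoryTheory.Monad

variable {K : Type*} [Category K]

lemma Algebra.ext_of_heq {T : Monad K} {X Y : T.Algebra} (h : X.A = Y.A) (h' : HEq X.a Y.a) :
    X = Y := by
  cases X; cases Y; cases h; cases h'; rfl

lemma Algebra.Hom.heq_of_heq_f {T : Monad K} {X X' Y Y' : T.Algebra} (hX : X = X') (hY : Y = Y')
    {f : X ⟶ Y} {g : X' ⟶ Y'} (h : HEq f.f g.f) : HEq f g := by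
  subst hX hY
  exact heq_of_eq (Algebra.Hom.ext (eq_of_heq h))

lemma Algebra.eqToHom_f {T : Monad K} {X Y : T.Algebra} (h : X = Y) :
    (eqToHom h).f = eqToHom (congrArg Algebra.A h) := by
  subst h; rfl

lemma eq_algebraFunctorOfMonadHom {A T : Monad K} (α : A ⟶ T) (R : T.Algebra ⥤ A.Algebra)
    (hforget : R ⋙ A.forget = T.forget)
    (hrestr : ∀ X : T.Algebra, HEq (R.obj X).a (α.app X.A ≫ X.a)) :
    R = algebraFunctorOfMonadHom α := by
  have hobj (X : T.Algebra) : R.obj X = (algebraFunctorOfMonadHom α).obj X :=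
    Algebra.ext_of_heq (Functor.congr_obj hforget X) (hrestr X)
  exact Functor.hext hobj fun X Y f =>
    Algebra.Hom.heq_of_heq_f (hobj X) (hobj Y) (Functor.hcongr_hom hforget f)

section

variable {A T : Monad K} {α : A ⟶ T} {N : A.Algebra ⥤ T.Algebra}
  (adj : N ⊣ algebraFunctorOfMonadHom α)

/- The underlying maps in `K` of the unit, the counit and the structure map, typed so that `rw`
can chain them: `((algebraFunctorOfMonadHom α).obj Z).A` is `Z.A` only up to unfolding. -/
def unitMap (X : A.Algebra) : X.A ⟶ (N.obj X).A := (adj.unit.app X).f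

def counitMap (Z : T.Algebra) : (N.obj ((algebraFunctorOfMonadHom α).obj Z)).A ⟶ Z.A :=
  (adj.counit.app Z).f

def unitMapRestrict (Z : T.Algebra) : Z.A ⟶ (N.obj ((algebraFunctorOfMonadHom α).obj Z)).A :=
  (adj.unit.app ((algebraFunctorOfMonadHom α).obj Z)).f

def structAlgHom (Y : adj.toMonad.Algebra) :
    (algebraFunctorOfMonadHom α).obj (N.obj Y.A) ⟶ Y.A :=
  Y.a

def structMap (Y : adj.toMonad.Algebra) : (N.obj Y.A).A ⟶ Y.A.A := Y.a.f

lemma unitMap_naturality {X X' : A.Algebra} (g : X ⟶ X') :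
    g.f ≫ unitMap adj X' = unitMap adj X ≫ (N.map g).f :=
  congrArg Algebra.Hom.f (adj.unit.naturality g)

lemma structMap_comp_unitMap (Y : adj.toMonad.Algebra) :
    structMap adj Y ≫ unitMap adj Y.A =
      unitMapRestrict adj (N.obj Y.A) ≫ (N.map (structAlgHom adj Y)).f :=
  unitMap_naturality adj Y.a

lemma unitMapRestrict_comp_counitMap (Z : T.Algebra) :
    unitMapRestrict adj Z ≫ counitMap adj Z = 𝟙 Z.A :=
  congrArg Algebra.Hom.f (adj.right_triangle_components Z)

lemma map_counitMap_comp (Z : T.Algebra) :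
    (T : K ⥤ K).map (counitMap adj Z) ≫ Z.a =
      (N.obj ((algebraFunctorOfMonadHom α).obj Z)).a ≫ counitMap adj Z :=
  (adj.counit.app Z).h

lemma unitMap_comp_structMap (Y : adj.toMonad.Algebra) :
    unitMap adj Y.A ≫ structMap adj Y = 𝟙 Y.A.A :=
  congrArg Algebra.Hom.f Y.unit

lemma counitMap_comp_structMap (Y : adj.toMonad.Algebra) :
    counitMap adj (N.obj Y.A) ≫ structMap adj Y =
      (N.map (structAlgHom adj Y)).f ≫ structMap adj Y :=
  congrArg Algebra.Hom.f Y.assoc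

lemma map_structMap_comp (Y : adj.toMonad.Algebra) :
    (A : K ⥤ K).map (structMap adj Y) ≫ Y.A.a =
      α.app (N.obj Y.A).A ≫ (N.obj Y.A).a ≫ structMap adj Y :=
  (Y.a.h).trans (Category.assoc _ _ _)

lemma map_f_comp_structMap {Y Y' : adj.toMonad.Algebra} (g : Y ⟶ Y') :
    (N.map g.f).f ≫ structMap adj Y' = structMap adj Y ≫ g.f.f :=
  congrArg Algebra.Hom.f g.h

def liftAction (Y : adj.toMonad.Algebra) : (T : K ⥤ K).obj Y.A.A ⟶ Y.A.A :=
  (T : K ⥤ K).map (unitMap adj Y.A) ≫ (N.obj Y.A).a ≫ structMap adj Y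

lemma map_structMap_comp_liftAction (Y : adj.toMonad.Algebra) :
    (T : K ⥤ K).map (structMap adj Y) ≫ liftAction adj Y = (N.obj Y.A).a ≫ structMap adj Y := by
  rw [liftAction, ← Functor.map_comp_assoc, structMap_comp_unitMap, Functor.map_comp_assoc,
    Algebra.Hom.h_assoc, ← counitMap_comp_structMap,
    ← reassoc_of% map_counitMap_comp adj (N.obj Y.A), ← Functor.map_comp_assoc,
    unitMapRestrict_comp_counitMap, Functor.map_id, Category.id_comp]

lemma unit_comp_liftAction (Y : adj.toMonad.Algebra) :
    T.η.app Y.A.A ≫ liftAction adj Y = 𝟙 Y.A.A := by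
  rw [liftAction, ← T.η.naturality_assoc, Functor.id_map, Algebra.unit_assoc,
    unitMap_comp_structMap]

lemma mu_comp_liftAction (Y : adj.toMonad.Algebra) :
    T.μ.app Y.A.A ≫ liftAction adj Y = (T : K ⥤ K).map (liftAction adj Y) ≫ liftAction adj Y :=
  calc T.μ.app Y.A.A ≫ liftAction adj Y
      = (T : K ⥤ K).map ((T : K ⥤ K).map (unitMap adj Y.A)) ≫
          T.μ.app (N.obj Y.A).A ≫ (N.obj Y.A).a ≫ structMap adj Y := by
        rw [liftAction, ← T.μ.naturality_assoc, Functor.comp_map]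
    _ = (T : K ⥤ K).map ((T : K ⥤ K).map (unitMap adj Y.A)) ≫ (T : K ⥤ K).map (N.obj Y.A).a ≫
          (T : K ⥤ K).map (structMap adj Y) ≫ liftAction adj Y := by
        rw [Algebra.assoc_assoc, map_structMap_comp_liftAction]
    _ = (T : K ⥤ K).map (liftAction adj Y) ≫ liftAction adj Y := by
        simp only [liftAction, Functor.map_comp, Category.assoc]

lemma liftAction_naturality {Y Y' : adj.toMonad.Algebra} (g : Y ⟶ Y') :
    (T : K ⥤ K).map g.f.f ≫ liftAction adj Y' = liftAction adj Y ≫ g.f.f := by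
  rw [liftAction, ← Functor.map_comp_assoc, unitMap_naturality, Functor.map_comp_assoc,
    Algebra.Hom.h_assoc, map_f_comp_structMap, liftAction, Category.assoc, Category.assoc]

def liftAlgebra (Y : adj.toMonad.Algebra) : T.Algebra where
  A := Y.A.A
  a := liftAction adj Y
  unit := unit_comp_liftAction adj Y
  assoc := mu_comp_liftAction adj Y

def comparisonInv : adj.toMonad.Algebra ⥤ T.Algebra where
  obj := liftAlgebra adj
  map g :=
    { f := g.f.f
      h := liftAction_naturality adj g }

lemma restrict_liftAlgebra (Y : adj.toMonad.Algebra) :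
    (algebraFunctorOfMonadHom α).obj (liftAlgebra adj Y) = Y.A := by
  refine Algebra.ext_of_heq rfl (heq_of_eq ?_)
  change α.app Y.A.A ≫ liftAction adj Y = Y.A.a
  rw [liftAction, ← α.naturality_assoc, ← map_structMap_comp, ← Functor.map_comp_assoc,
    unitMap_comp_structMap, Functor.map_id, Category.id_comp]

def structHom (Y : adj.toMonad.Algebra) : N.obj Y.A ⟶ liftAlgebra adj Y where
  f := structMap adj Y
  h := map_structMap_comp_liftAction adj Y

lemma counit_app_liftAlgebra (Y : adj.toMonad.Algebra) :
    adj.counit.app (liftAlgebra adj Y) =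
      N.map (eqToHom (restrict_liftAlgebra adj Y)) ≫ structHom adj Y := by
  have transpose :
      adj.homEquiv _ _ (structHom adj Y) = eqToHom (restrict_liftAlgebra adj Y).symm := by
    ext
    rw [Adjunction.homEquiv_unit, Algebra.comp_f, Algebra.eqToHom_f]
    exact unitMap_comp_structMap adj Y
  rw [← Equiv.symm_apply_apply (adj.homEquiv _ _) (structHom adj Y), transpose,
    ← adj.homEquiv_naturality_left_symm, eqToHom_trans, eqToHom_refl, adj.homEquiv_symm_id]

lemma liftAlgebra_comparison_obj (X : T.Algebra) :
    liftAlgebra adj ((comparison adj).obj X) = X := by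
  refine Algebra.ext_of_heq rfl (heq_of_eq ?_)
  change (T : K ⥤ K).map (unitMapRestrict adj X) ≫ (N.obj _).a ≫ counitMap adj X = X.a
  rw [← map_counitMap_comp, ← Functor.map_comp_assoc, unitMapRestrict_comp_counitMap,
    Functor.map_id, Category.id_comp]

lemma comparison_obj_liftAlgebra (Y : adj.toMonad.Algebra) :
    (comparison adj).obj (liftAlgebra adj Y) = Y := by
  refine Algebra.ext_of_heq (restrict_liftAlgebra adj Y)
    (Algebra.Hom.heq_of_heq_f (congrArg adj.toMonad.obj (restrict_liftAlgebra adj Y))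
      (restrict_liftAlgebra adj Y) ?_)
  change HEq (adj.counit.app (liftAlgebra adj Y)).f Y.a.f
  rw [counit_app_liftAlgebra, Algebra.comp_f, eqToHom_map, Algebra.eqToHom_f]
  exact eqToHom_comp_heq _ _

theorem comparison_comp_comparisonInv : comparison adj ⋙ comparisonInv adj = 𝟭 T.Algebra :=
  Functor.hext (liftAlgebra_comparison_obj adj) fun X Y _ =>
    Algebra.Hom.heq_of_heq_f (liftAlgebra_comparison_obj adj X)
      (liftAlgebra_comparison_obj adj Y) HEq.rfl

theorem comparisonInv_comp_comparison :
    comparisonInv adj ⋙ comparison adj = 𝟭 adj.toMonad.Algebra :=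
  Functor.hext (comparison_obj_liftAlgebra adj) fun Y Y' _ =>
    Algebra.Hom.heq_of_heq_f (comparison_obj_liftAlgebra adj Y) (comparison_obj_liftAlgebra adj Y')
      (Algebra.Hom.heq_of_heq_f (restrict_liftAlgebra adj Y) (restrict_liftAlgebra adj Y') HEq.rfl)

end

end CategoryTheory.Monad

theorem stmt10_general {K : Type*} [Category K]
    (A T : Monad K) (α : A ⟶ T)
    (R_A : T.Algebra ⥤ A.Algebra)
    (hforget : R_A ⋙ A.forget = T.forget)
    (hrestr : ∀ X : T.Algebra, HEq (R_A.obj X).a (α.app X.A ≫ X.a))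
    (N_A : A.Algebra ⥤ T.Algebra) (adj : N_A ⊣ R_A) :
    ∃ G : adj.toMonad.Algebra ⥤ T.Algebra,
      Monad.comparison adj ⋙ G = 𝟭 T.Algebra ∧
      G ⋙ Monad.comparison adj = 𝟭 adj.toMonad.Algebra := by
  obtain rfl := Monad.eq_algebraFunctorOfMonadHom α R_A hforget hrestr
  exact ⟨Monad.comparisonInv adj, Monad.comparison_comp_comparisonInv adj,
    Monad.comparisonInv_comp_comparison adj⟩

/-- For a morphism of monads `α : A ⟶ T` on a category with coequalizers, with `A` and `T`
preserving coequalizers, the Eilenberg–Moore comparison functor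
`K_T → (K_A)_{R_A N_A}` associated to the canonical adjunction `N_A ⊣ R_A` is an
isomorphism of categories. -/
theorem stmt10 {K : Type*} [Category K] [HasCoequalizers K]
    (A T : Monad K) (α : A ⟶ T)
    (hA : PreservesColimitsOfShape WalkingParallelPair (A : K ⥤ K))
    (hT : PreservesColimitsOfShape WalkingParallelPair (T : K ⥤ K))
    (R_A : T.Algebra ⥤ A.Algebra)
    (hforget : R_A ⋙ A.forget = T.forget)
    (hrestr : ∀ X : T.Algebra, HEq (R_A.obj X).a (α.app X.A ≫ X.a))
    (N_A : A.Algebra ⥤ T.Algebra) (adj : N_A ⊣ R_A) :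
    ∃ G : adj.toMonad.Algebra ⥤ T.Algebra,
      Monad.comparison adj ⋙ G = 𝟭 T.Algebra ∧
      G ⋙ Monad.comparison adj = 𝟭 adj.toMonad.Algebra :=
  stmt10_general A T α R_A hforget hrestr N_A adj
end

section
/- Let C be a comonad on a category A and (L : B → A, R) an adjoint pair with counit ε, where L is a left C-comodule functor with coaction l : L → CL. Then the canonical natural transformation can := (Cε) ∘ (lR) : LR → C is a morphism of comonads from the comonad LR (induced by the adjunction) to C. -/
open CategoryTheory

/-!
The coaction is recovered from `can = (Cε) ∘ (lR)` as `l = can_L ∘ Lη` (naturality of `l` and a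
triangle identity). Hence, by naturality of `can`, the coproduct side `can ∘ LR(can) ∘ LηR`
equals `C(can) ∘ lR`, which coassociativity of `l` and naturality of `δ` identify with `δ ∘ can`.
The counit law is counitality of `l` transported along the naturality of `ε`.
-/

namespace CategoryTheory.Adjunction

variable {A B : Type*} [Category A] [Category B] {L : B ⥤ A} {R : A ⥤ B} (adj : L ⊣ R)

@[simps]
def canOfCoaction {F : A ⥤ A} (l : L ⟶ L ⋙ F) : R ⋙ L ⟶ F where
  app X := l.app (R.obj X) ≫ F.map (adj.counit.app X)
  naturality X Y f := by
    have hl := l.naturality (R.map f)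
    simp only [Functor.comp_obj, Functor.comp_map] at hl ⊢
    rw [reassoc_of% hl, ← F.map_comp, adj.counit_naturality, F.map_comp, Category.assoc]

theorem map_unit_comp_canOfCoaction_app {F : A ⥤ A} (l : L ⟶ L ⋙ F) (Y : B) :
    L.map (adj.unit.app Y) ≫ (adj.canOfCoaction l).app (L.obj Y) = l.app Y := by
  have hl := l.naturality (adj.unit.app Y)
  simp only [Functor.comp_obj, Functor.comp_map] at hl
  rw [canOfCoaction_app, reassoc_of% hl, ← F.map_comp, adj.left_triangle_components,
    F.map_id, Category.comp_id]

variable (C : Comonad A) (l : L ⟶ L ⋙ (C : A ⥤ A))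

theorem canOfCoaction_app_comp_ε
    (hcounit : ∀ Y : B, l.app Y ≫ C.ε.app (L.obj Y) = 𝟙 (L.obj Y)) (X : A) :
    (adj.canOfCoaction l).app X ≫ C.ε.app X = adj.counit.app X := by
  rw [canOfCoaction_app, Category.assoc, C.ε.naturality, reassoc_of% hcounit]
  rfl

theorem canOfCoaction_app_comp_δ
    (hcoassoc : ∀ Y : B, l.app Y ≫ C.δ.app (L.obj Y) = l.app Y ≫ (C : A ⥤ A).map (l.app Y))
    (X : A) :
    (adj.canOfCoaction l).app X ≫ C.δ.app X =
      l.app (R.obj X) ≫ (C : A ⥤ A).map ((adj.canOfCoaction l).app X) := by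
  have hδ := C.δ.naturality (adj.counit.app X)
  simp only [Functor.id_obj, Functor.comp_obj, Functor.comp_map] at hδ
  rw [canOfCoaction_app, Category.assoc, hδ, reassoc_of% hcoassoc, Functor.map_comp]

def comonadHomOfCoaction
    (hcoassoc : ∀ Y : B, l.app Y ≫ C.δ.app (L.obj Y) = l.app Y ≫ (C : A ⥤ A).map (l.app Y))
    (hcounit : ∀ Y : B, l.app Y ≫ C.ε.app (L.obj Y) = 𝟙 (L.obj Y)) :
    adj.toComonad ⟶ C where
  toNatTrans := adj.canOfCoaction l
  app_ε := adj.canOfCoaction_app_comp_ε C l hcounit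
  app_δ X := by
    have h := congrArg (· ≫ (C : A ⥤ A).map ((adj.canOfCoaction l).app X))
      (adj.map_unit_comp_canOfCoaction_app l (R.obj X))
    simp only [Category.assoc] at h
    exact (adj.canOfCoaction_app_comp_δ C l hcoassoc X).trans h.symm

end CategoryTheory.Adjunction

/-- For a comonad `C` on `A` and a left `C`-comodule functor `(L, l)` with right adjoint `R`,
the canonical natural transformation `can = (Cε) ∘ (lR) : LR → C` is a morphism of comonads
from the comonad `LR` induced by the adjunction to `C`. -/
theorem stmt12 {A B : Type*} [Category A] [Category B]
    (C : Comonad A) (L : B ⥤ A) (R : A ⥤ B) (adj : L ⊣ R)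
    (l : L ⟶ L ⋙ (C : A ⥤ A))
    -- coassociativity of the coaction
    (hcoassoc : ∀ Y : B, l.app Y ≫ C.δ.app (L.obj Y) =
      l.app Y ≫ (C : A ⥤ A).map (l.app Y))
    -- counitality of the coaction
    (hcounit : ∀ Y : B, l.app Y ≫ C.ε.app (L.obj Y) = 𝟙 (L.obj Y)) :
    -- `can` is compatible with the counits
    (∀ X : A, (l.app (R.obj X) ≫ (C : A ⥤ A).map (adj.counit.app X)) ≫ C.ε.app X =
      adj.counit.app X) ∧
    -- `can` is compatible with the coproducts
    (∀ X : A, (l.app (R.obj X) ≫ (C : A ⥤ A).map (adj.counit.app X)) ≫ C.δ.app X =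
      L.map (adj.unit.app (R.obj X)) ≫
        L.map (R.map (l.app (R.obj X) ≫ (C : A ⥤ A).map (adj.counit.app X))) ≫
        (l.app (R.obj ((C : A ⥤ A).obj X)) ≫
          (C : A ⥤ A).map (adj.counit.app ((C : A ⥤ A).obj X)))) := by
  let can := adj.comonadHomOfCoaction C l hcoassoc hcounit
  refine ⟨can.app_ε, fun X => ?_⟩
  have hnat := can.naturality (can.app X)
  exact (can.app_δ X).trans (congrArg (L.map (adj.unit.app (R.obj X)) ≫ ·) hnat.symm)
end

section
/- Let (L ⊣ R) be an adjunction with L : K → C, unit η and counit ε, and let G be a comonad on C such that R is a right G-comodule functor with coaction g : R → RG. Assume the equalizer (B, β) of gL and Rḡ exists in the functor category, where ḡ := (εGL) ∘ (LgL) ∘ (Lη) : L → GL is the induced left G-coaction on L. Then B carries a unique monad structure (B, m^B, u^B) on K such that β : B → RL is a morphism of monads into the monad RL induced by the adjunction. -/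
/-!
Since `β` is an equalizer it is monic, so a monad structure on `B` making `β` a monad morphism
into `RL` is unique, and it exists as soon as `η` and `(β ◫ β) ≫ RεL` factor through `β`: the monad
laws for `B` follow from those of `RL` after composing with `β`. Both factorizations hold because
the maps `Z ⟶ RLY` equalizing `g` and `Rḡ` contain `η` and are closed under Kleisli composition
`h, f ↦ h ≫ R (f♭)`; this in turn holds because transposition intertwines the two coactions:
`ḡ ≫ G (f♭) = (f ≫ g)♭`.
-/

open CategoryTheory CategoryTheory.Limits

section Submonad

variable {K : Type*} [Category K] {T : Monad K} {B : K ⥤ K} {β : B ⟶ (T : K ⥤ K)}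
  {m : B ⋙ B ⟶ B} {u : 𝟭 K ⟶ B}

theorem submonad_mul_app (hm : m ≫ β = (β ◫ β) ≫ T.μ) (Y : K) :
    m.app Y ≫ β.app Y = B.map (β.app Y) ≫ β.app (T.obj Y) ≫ T.μ.app Y := by
  simpa using congr_app hm Y

variable [Mono β]

theorem submonad_assoc (hm : m ≫ β = (β ◫ β) ≫ T.μ) :
    Functor.whiskerRight m B ≫ m = Functor.whiskerLeft B m ≫ m := by
  rw [← cancel_mono β]
  ext Y
  have hmY := submonad_mul_app hm
  simp only [NatTrans.comp_app, Functor.whiskerRight_app, Functor.whiskerLeft_app, Category.assoc,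
    hmY, reassoc_of% hmY, β.naturality_assoc, ← T.map_comp_assoc, ← T.μ.naturality_assoc]
  simp only [Functor.map_comp, Category.assoc, T.assoc, Functor.comp_map, Functor.comp_obj]

theorem submonad_left_unit (hm : m ≫ β = (β ◫ β) ≫ T.μ) (hu : u ≫ β = T.η) :
    Functor.whiskerLeft B u ≫ m = 𝟙 B := by
  rw [← cancel_mono β]
  ext Y
  have huY : u.app (B.obj Y) ≫ β.app (B.obj Y) = T.η.app (B.obj Y) := congr_app hu (B.obj Y)
  simp only [NatTrans.comp_app, Functor.whiskerLeft_app, Category.assoc, submonad_mul_app hm,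
    β.naturality_assoc, reassoc_of% huY]
  rw [← T.η.naturality_assoc]
  simp

theorem submonad_right_unit (hm : m ≫ β = (β ◫ β) ≫ T.μ) (hu : u ≫ β = T.η) :
    Functor.whiskerRight u B ≫ m = 𝟙 B := by
  rw [← cancel_mono β]
  ext Y
  have huY : u.app Y ≫ β.app Y = T.η.app Y := congr_app hu Y
  simp only [NatTrans.comp_app, Functor.whiskerRight_app, Category.assoc, submonad_mul_app hm,
    β.naturality_assoc]
  rw [← T.map_comp_assoc, huY]
  simp

end Submonad

section Coaction

variable {K C : Type*} [Category K] [Category C] {L : K ⥤ C} {R : C ⥤ K} (adj : L ⊣ R)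
  {G : Comonad C} {g : R ⟶ (G : C ⥤ C) ⋙ R} {gbar : L ⟶ L ⋙ (G : C ⥤ C)}

theorem gbar_comp_map_homEquiv_symm
    (hgbar : ∀ Y : K, gbar.app Y = (adj.homEquiv Y _).symm (adj.unit.app Y ≫ g.app (L.obj Y)))
    {Z : K} {X : C} (f : Z ⟶ R.obj X) :
    gbar.app Z ≫ G.map ((adj.homEquiv Z X).symm f) =
      (adj.homEquiv Z (G.obj X)).symm (f ≫ g.app X) := by
  rw [hgbar]
  dsimp only [Functor.comp_obj]
  rw [← adj.homEquiv_naturality_right_symm, Category.assoc]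
  congr 1
  have hg := g.naturality ((adj.homEquiv Z X).symm f)
  simp only [Functor.comp_map] at hg
  rw [← hg, ← Category.assoc, ← adj.homEquiv_unit, Equiv.apply_symm_apply]

theorem unit_comp_map_gbar
    (hgbar : ∀ Y : K, gbar.app Y = (adj.homEquiv Y _).symm (adj.unit.app Y ≫ g.app (L.obj Y)))
    (Y : K) : adj.unit.app Y ≫ R.map (gbar.app Y) = adj.unit.app Y ≫ g.app (L.obj Y) := by
  simp [hgbar, ← adj.homEquiv_unit]

theorem kleisli_comp_equalizes
    (hgbar : ∀ Y : K, gbar.app Y = (adj.homEquiv Y _).symm (adj.unit.app Y ≫ g.app (L.obj Y)))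
    {W Z Y : K} (h : W ⟶ R.obj (L.obj Z)) (f : Z ⟶ R.obj (L.obj Y))
    (hh : h ≫ g.app (L.obj Z) = h ≫ R.map (gbar.app Z))
    (hf : f ≫ g.app (L.obj Y) = f ≫ R.map (gbar.app Y)) :
    (h ≫ R.map ((adj.homEquiv _ _).symm f)) ≫ g.app (L.obj Y) =
      (h ≫ R.map ((adj.homEquiv _ _).symm f)) ≫ R.map (gbar.app Y) := by
  have hg := g.naturality ((adj.homEquiv _ _).symm f)
  simp only [Functor.comp_map] at hg
  rw [Category.assoc, hg, reassoc_of% hh, ← R.map_comp, gbar_comp_map_homEquiv_symm adj hgbar, hf,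
    adj.homEquiv_naturality_right_symm, R.map_comp, Category.assoc]

end Coaction

theorem stmt13_general {K C : Type*} [Category K] [Category C]
    (L : K ⥤ C) (R : C ⥤ K) (adj : L ⊣ R) (G : Comonad C)
    (g : R ⟶ (G : C ⥤ C) ⋙ R)
    -- the induced left `G`-coaction `ḡ` on `L`
    (gbar : L ⟶ L ⋙ (G : C ⥤ C))
    (hgbar : ∀ Y : K, gbar.app Y =
      L.map (adj.unit.app Y) ≫ L.map (g.app (L.obj Y)) ≫
        adj.counit.app ((G : C ⥤ C).obj (L.obj Y)))
    -- the equalizer `(B, β)` of `gL` and `Rḡ`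
    (B : K ⥤ K) (β : B ⟶ L ⋙ R)
    (w : β ≫ Functor.whiskerLeft L g =
      β ≫ (Functor.whiskerRight gbar R : L ⋙ R ⟶ L ⋙ (G : C ⥤ C) ⋙ R))
    (hB : IsLimit (Fork.ofι β w)) :
    -- there is a unique monad structure on `B` making `β` a monad morphism into `RL`
    ∃! mu : (B ⋙ B ⟶ B) × (𝟭 K ⟶ B),
      -- associativity
      (∀ Y : K, B.map (mu.1.app Y) ≫ mu.1.app Y = mu.1.app (B.obj Y) ≫ mu.1.app Y) ∧
      -- unitality
      (∀ Y : K, mu.2.app (B.obj Y) ≫ mu.1.app Y = 𝟙 (B.obj Y)) ∧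
      (∀ Y : K, B.map (mu.2.app Y) ≫ mu.1.app Y = 𝟙 (B.obj Y)) ∧
      -- `β` is compatible with the units
      (∀ Y : K, mu.2.app Y ≫ β.app Y = adj.unit.app Y) ∧
      -- `β` is compatible with the multiplications
      (∀ Y : K, mu.1.app Y ≫ β.app Y =
        B.map (β.app Y) ≫ β.app (R.obj (L.obj Y)) ≫
          R.map (adj.counit.app (L.obj Y))) := by
  have hgbar' : ∀ Y : K, gbar.app Y =
      (adj.homEquiv Y _).symm (adj.unit.app Y ≫ g.app (L.obj Y)) := by
    simp [hgbar, Adjunction.homEquiv_counit]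
  have hw (Y : K) : β.app Y ≫ g.app (L.obj Y) = β.app Y ≫ R.map (gbar.app Y) := by
    simpa using congr_app w Y
  let T := adj.toMonad
  have : Mono (Y := (T : K ⥤ K)) β := Fork.IsLimit.mono hB
  obtain ⟨u, hu⟩ : ∃ u : 𝟭 K ⟶ B, u ≫ β = T.η :=
    ⟨_, (Fork.IsLimit.lift' hB adj.unit <| by
      ext Y; simpa using (unit_comp_map_gbar adj hgbar' Y).symm).2⟩
  obtain ⟨m, hm⟩ : ∃ m : B ⋙ B ⟶ B, m ≫ β = (β ◫ β) ≫ T.μ :=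
    ⟨_, (Fork.IsLimit.lift' hB ((β ◫ β) ≫ T.μ) <| by
      ext Y
      simpa [T, Adjunction.homEquiv_counit] using
        kleisli_comp_equalizes adj hgbar' _ _ (hw (B.obj Y)) (hw Y)).2⟩
  have hassoc := submonad_assoc (T := T) hm
  have hleft := submonad_left_unit (T := T) hm hu
  have hright := submonad_right_unit (T := T) hm hu
  have hmY : ∀ Y : K, m.app Y ≫ β.app Y =
      B.map (β.app Y) ≫ β.app (R.obj (L.obj Y)) ≫ R.map (adj.counit.app (L.obj Y)) :=
    submonad_mul_app (T := T) hm
  have huY : ∀ Y : K, u.app Y ≫ β.app Y = adj.unit.app Y := congr_app hu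
  refine ⟨(m, u), ⟨fun Y => congr_app hassoc Y, fun Y => by simpa using congr_app hleft Y,
    fun Y => by simpa using congr_app hright Y, huY, hmY⟩, ?_⟩
  rintro ⟨m', u'⟩ ⟨-, -, -, hu', hm'⟩
  refine Prod.ext (Fork.IsLimit.hom_ext hB ?_) (Fork.IsLimit.hom_ext hB ?_) <;> ext Y
  · exact (hm' Y).trans (hmY Y).symm
  · exact (hu' Y).trans (huY Y).symm

/-- Given an adjunction `L ⊣ R` and a comonad `G` on `C` with a right `G`-coaction
`g : R → RG`, if the equalizer `(B, β)` of `gL` and `Rḡ` exists (where `ḡ` is the induced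
left `G`-coaction on `L`), then `B` carries a unique monad structure such that `β` is a
morphism of monads into the monad `RL` of the adjunction. -/
theorem stmt13 {K C : Type*} [Category K] [Category C]
    (L : K ⥤ C) (R : C ⥤ K) (adj : L ⊣ R) (G : Comonad C)
    (g : R ⟶ (G : C ⥤ C) ⋙ R)
    -- coassociativity and counitality of the right coaction `g`
    (hg1 : ∀ X : C, g.app X ≫ R.map (G.δ.app X) = g.app X ≫ g.app ((G : C ⥤ C).obj X))
    (hg2 : ∀ X : C, g.app X ≫ R.map (G.ε.app X) = 𝟙 (R.obj X))
    -- the induced left `G`-coaction `ḡ` on `L`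
    (gbar : L ⟶ L ⋙ (G : C ⥤ C))
    (hgbar : ∀ Y : K, gbar.app Y =
      L.map (adj.unit.app Y) ≫ L.map (g.app (L.obj Y)) ≫
        adj.counit.app ((G : C ⥤ C).obj (L.obj Y)))
    -- the equalizer `(B, β)` of `gL` and `Rḡ`
    (B : K ⥤ K) (β : B ⟶ L ⋙ R)
    (w : β ≫ Functor.whiskerLeft L g =
      β ≫ (Functor.whiskerRight gbar R : L ⋙ R ⟶ L ⋙ (G : C ⥤ C) ⋙ R))
    (hB : IsLimit (Fork.ofι β w)) :
    -- there is a unique monad structure on `B` making `β` a monad morphism into `RL`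
    ∃! mu : (B ⋙ B ⟶ B) × (𝟭 K ⟶ B),
      -- associativity
      (∀ Y : K, B.map (mu.1.app Y) ≫ mu.1.app Y = mu.1.app (B.obj Y) ≫ mu.1.app Y) ∧
      -- unitality
      (∀ Y : K, mu.2.app (B.obj Y) ≫ mu.1.app Y = 𝟙 (B.obj Y)) ∧
      (∀ Y : K, B.map (mu.2.app Y) ≫ mu.1.app Y = 𝟙 (B.obj Y)) ∧
      -- `β` is compatible with the units
      (∀ Y : K, mu.2.app Y ≫ β.app Y = adj.unit.app Y) ∧
      -- `β` is compatible with the multiplications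
      (∀ Y : K, mu.1.app Y ≫ β.app Y =
        B.map (β.app Y) ≫ β.app (R.obj (L.obj Y)) ≫
          R.map (adj.counit.app (L.obj Y))) :=
  stmt13_general L R adj G g gbar hgbar B β w hB
end

section
/- Given an object (T, (N_A ⊣ R_A), (N_B ⊣ R_B), C, ξ) of RArr(A, B), i.e., two adjunctions N_A : A → T, R_A : T → A (unit η^A, counit ε^A) and N_B : B → T, R_B : T → B (unit η^B, counit ε^B), a comonad C on A, and a comonad arrow (R_A, ξ) from C to the comonad N_B R_B with ξ : C R_A → R_A N_B R_B invertible, the natural transformation τ := (ξ N_A R_A N_B) ∘ (C η^A R_A N_B) ∘ (ξ⁻¹ N_B) ∘ (R_A N_B η^B) : R_A N_B → R_A N_B R_B N_A R_A N_B makes (T, (N_A, R_A), (N_B, R_B), τ) a pre-torsor. -/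
/-!
Via `ξ⁻¹`, the object `R_A N_B X` becomes a `C`-coalgebra with coaction `ξ⁻¹ ∘ R_A N_B η^B`, and
`τ` is the map `M → C M → C R_A N_A M ≅ R_A N_B R_B N_A M` built from the coaction of a coalgebra
`M`. The two counit axioms then come from the counit law of the coalgebra and the triangle
identities. Coassociativity of `τ` comes from coassociativity of the coaction, together with the
comonad-arrow condition, which says that `ξ` is a coalgebra morphism out of the cofree coalgebra
`C R_A Y`.
-/

open CategoryTheory

namespace CategoryTheory

variable {A B T : Type*} [Category A] [Category B] [Category T]
  {N_A : A ⥤ T} {R_A : T ⥤ A} (adjA : N_A ⊣ R_A)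
  {N_B : B ⥤ T} {R_B : T ⥤ B} (adjB : N_B ⊣ R_B)
  {C : Comonad A} (ξ : (R_A ⋙ (C : A ⥤ A)) ≅ (R_B ⋙ N_B ⋙ R_A))

structure IsComonadArrow : Prop where
  counit : ∀ X : T, ξ.hom.app X ≫ R_A.map (adjB.counit.app X) = C.ε.app (R_A.obj X)
  comul : ∀ X : T, ξ.hom.app X ≫ R_A.map (N_B.map (adjB.unit.app (R_B.obj X))) =
    C.δ.app (R_A.obj X) ≫ (C : A ⥤ A).map (ξ.hom.app X) ≫ ξ.hom.app (N_B.obj (R_B.obj X))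

variable {adjB ξ}

namespace IsComonadArrow

variable (h : IsComonadArrow adjB ξ)
include h

lemma inv_app_comp_counit (Y : T) :
    ξ.inv.app Y ≫ C.ε.app (R_A.obj Y) = R_A.map (adjB.counit.app Y) := by
  rw [← h.counit, Iso.inv_hom_id_app_assoc]

lemma inv_app_comp_comul (Y : T) :
    ξ.inv.app Y ≫ C.δ.app (R_A.obj Y) =
      R_A.map (N_B.map (adjB.unit.app (R_B.obj Y))) ≫ ξ.inv.app (N_B.obj (R_B.obj Y)) ≫
        (C : A ⥤ A).map (ξ.inv.app Y) := by
  rw [← cancel_epi (ξ.hom.app Y), reassoc_of% h.comul]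
  simp [← Functor.map_comp]

abbrev coalgebra (X : B) : C.Coalgebra where
  A := R_A.obj (N_B.obj X)
  a := R_A.map (N_B.map (adjB.unit.app X)) ≫ ξ.inv.app (N_B.obj X)
  counit := by
    rw [Category.assoc, h.inv_app_comp_counit, ← R_A.map_comp, adjB.left_triangle_components,
      R_A.map_id]
  coassoc := by
    have hη : adjB.unit.app X ≫ adjB.unit.app (R_B.obj (N_B.obj X)) =
        adjB.unit.app X ≫ R_B.map (N_B.map (adjB.unit.app X)) :=
      adjB.unit.naturality (adjB.unit.app X)
    have hξ : ξ.inv.app (N_B.obj X) ≫ (C : A ⥤ A).map (R_A.map (N_B.map (adjB.unit.app X))) =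
        R_A.map (N_B.map (R_B.map (N_B.map (adjB.unit.app X)))) ≫ ξ.inv.app _ :=
      (ξ.inv.naturality _).symm
    rw [Category.assoc, h.inv_app_comp_comul, Functor.map_comp, Category.assoc,
      reassoc_of% hξ, ← Functor.map_comp_assoc, ← Functor.map_comp_assoc, ← Functor.map_comp,
      ← Functor.map_comp, hη]

end IsComonadArrow

namespace Comonad.Coalgebra

variable (ξ) in
/-- For the coalgebra `h.coalgebra X` this is the paper's `τ` at `X`. -/
def preTorsorMap (M : C.Coalgebra) : M.A ⟶ R_A.obj (N_B.obj (R_B.obj (N_A.obj M.A))) :=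
  M.a ≫ (C : A ⥤ A).map (adjA.unit.app M.A) ≫ ξ.hom.app (N_A.obj M.A)

lemma preTorsorMap_comp_map (M : C.Coalgebra) {Y : T} (g : N_A.obj M.A ⟶ Y) :
    M.preTorsorMap adjA ξ ≫ R_A.map (N_B.map (R_B.map g)) =
      M.a ≫ (C : A ⥤ A).map (adjA.unit.app M.A ≫ R_A.map g) ≫ ξ.hom.app Y := by
  have hξ : ξ.hom.app (N_A.obj M.A) ≫ R_A.map (N_B.map (R_B.map g)) =
      (C : A ⥤ A).map (R_A.map g) ≫ ξ.hom.app Y :=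
    (ξ.hom.naturality g).symm
  rw [preTorsorMap, Category.assoc, Category.assoc, hξ, Functor.map_comp_assoc]

lemma preTorsorMap_comp_counit (h : IsComonadArrow adjB ξ) (M : C.Coalgebra) :
    M.preTorsorMap adjA ξ ≫ R_A.map (adjB.counit.app (N_A.obj M.A)) = adjA.unit.app M.A := by
  have hε : (C : A ⥤ A).map (adjA.unit.app M.A) ≫ C.ε.app (R_A.obj (N_A.obj M.A)) =
      C.ε.app M.A ≫ adjA.unit.app M.A :=
    C.ε.naturality _
  rw [preTorsorMap, Category.assoc, Category.assoc, h.counit, hε, M.counit_assoc]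

lemma preTorsorMap_comp_map_preTorsorMap (h : IsComonadArrow adjB ξ) (M : C.Coalgebra) :
    M.preTorsorMap adjA ξ ≫ R_A.map (N_B.map (R_B.map (N_A.map (M.preTorsorMap adjA ξ)))) =
      M.preTorsorMap adjA ξ ≫ (h.coalgebra (R_B.obj (N_A.obj M.A))).preTorsorMap adjA ξ := by
  have hδ : (C : A ⥤ A).map (adjA.unit.app M.A) ≫ C.δ.app (R_A.obj (N_A.obj M.A)) =
      C.δ.app M.A ≫ (C : A ⥤ A).map ((C : A ⥤ A).map (adjA.unit.app M.A)) :=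
    C.δ.naturality _
  rw [preTorsorMap_comp_map, adjA.unit_naturality]
  dsimp only [preTorsorMap]
  simp only [Category.assoc, Functor.map_comp]
  rw [reassoc_of% h.comul, Iso.hom_inv_id_app_assoc, reassoc_of% hδ, ← M.coassoc_assoc]

end Comonad.Coalgebra

lemma IsComonadArrow.preTorsorMap_coalgebra_comp_map_counit (h : IsComonadArrow adjB ξ) (X : B) :
    (h.coalgebra X).preTorsorMap adjA ξ ≫
        R_A.map (N_B.map (R_B.map (adjA.counit.app (N_B.obj X)))) =
      R_A.map (N_B.map (adjB.unit.app X)) := by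
  rw [Comonad.Coalgebra.preTorsorMap_comp_map, adjA.right_triangle_components]
  simp

end CategoryTheory

/-- A regular comonad arrow `(R_A, ξ)` from a comonad `C` on `A` to the comonad `N_B R_B`
determines a pre-torsor `τ = (ξ N_A R_A N_B) ∘ (C η^A R_A N_B) ∘ (ξ⁻¹ N_B) ∘ (R_A N_B η^B)`
over the two adjunctions. -/
theorem stmt14 {A B T : Type*} [Category A] [Category B] [Category T]
    (N_A : A ⥤ T) (R_A : T ⥤ A) (adjA : N_A ⊣ R_A)
    (N_B : B ⥤ T) (R_B : T ⥤ B) (adjB : N_B ⊣ R_B)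
    (C : Comonad A)
    -- the regular comonad arrow, given by the invertible `ξ : C R_A ≅ R_A N_B R_B`
    (ξ : (R_A ⋙ (C : A ⥤ A)) ≅ (R_B ⋙ N_B ⋙ R_A))
    -- compatibility of `ξ` with the counits
    (hξ1 : ∀ X : T, ξ.hom.app X ≫ R_A.map (adjB.counit.app X) = C.ε.app (R_A.obj X))
    -- compatibility of `ξ` with the coproducts
    (hξ2 : ∀ X : T, ξ.hom.app X ≫ R_A.map (N_B.map (adjB.unit.app (R_B.obj X))) =
      C.δ.app (R_A.obj X) ≫ (C : A ⥤ A).map (ξ.hom.app X) ≫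
        ξ.hom.app (N_B.obj (R_B.obj X)))
    -- the pre-torsor map `τ`
    (τ : ∀ X : B, R_A.obj (N_B.obj X) ⟶
      R_A.obj (N_B.obj (R_B.obj (N_A.obj (R_A.obj (N_B.obj X))))))
    (hτ : ∀ X : B, τ X =
      R_A.map (N_B.map (adjB.unit.app X)) ≫
        ξ.inv.app (N_B.obj X) ≫
        (C : A ⥤ A).map (adjA.unit.app (R_A.obj (N_B.obj X))) ≫
        ξ.hom.app (N_A.obj (R_A.obj (N_B.obj X)))) :
    -- first pre-torsor axiom
    (∀ X : B, τ X ≫ R_A.map (N_B.map (R_B.map (adjA.counit.app (N_B.obj X)))) =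
      R_A.map (N_B.map (adjB.unit.app X))) ∧
    -- second pre-torsor axiom
    (∀ X : B, τ X ≫ R_A.map (adjB.counit.app (N_A.obj (R_A.obj (N_B.obj X)))) =
      adjA.unit.app (R_A.obj (N_B.obj X))) ∧
    -- coassociativity of `τ`
    (∀ X : B, τ X ≫ R_A.map (N_B.map (R_B.map (N_A.map (τ X)))) =
      τ X ≫ τ (R_B.obj (N_A.obj (R_A.obj (N_B.obj X))))) := by
  have h : IsComonadArrow adjB ξ := ⟨hξ1, hξ2⟩
  obtain rfl : τ = fun X => (h.coalgebra X).preTorsorMap adjA ξ := by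
    funext X
    rw [hτ, Comonad.Coalgebra.preTorsorMap, Category.assoc]
  exact ⟨h.preTorsorMap_coalgebra_comp_map_counit adjA,
    fun X => Comonad.Coalgebra.preTorsorMap_comp_counit adjA h _,
    fun X => Comonad.Coalgebra.preTorsorMap_comp_map_preTorsorMap adjA h _⟩
end

section
/- Let A and B be categories with equalizers, and let P : A → B, Q : B → A, R : A → A, S : B → B be equalizer-preserving functors equipped with natural transformations r : Id_A → R, s : Id_B → S, w : QP → R, z : PQ → S, τ : Q → QPQ satisfying: (i) r is the equalizer of rR and Rr, and s is the equalizer of sS and Ss; (ii) (QPτ) ∘ τ = (τPQ) ∘ τ; (iii) (Qz) ∘ τ = Qs and (wQ) ∘ τ = rQ. Then the equalizer C of ω^l := (QPw) ∘ (τP) and ω^r := QPr (as natural transformations QP → QPR) carries a comonad structure on A whose underlying functor preserves equalizers, and Q is a left C-comodule functor via the unique c : Q → CQ with (iQ) ∘ c = τ, where i : C → QP is the equalizer inclusion. -/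
open CategoryTheory CategoryTheory.Limits

/-!
Everything is obtained by factoring through equalizers. The equalizer `C` of two natural
transformations between equalizer-preserving functors preserves equalizers, because limits
commute with limits. The counit `ε` is the factorisation of `i ≫ w` through `r`, the coaction `c`
the factorisation of `τ` through `iQ` (possible by (ii) and (iii)), and `Δ` the factorisation of
`i ≫ cP` through `Ci`, which is again an equalizer. All identities are then checked after
composing with the monomorphisms `i`, `r`, `Ci`, `CCi`, `Cr`; coassociativity and counitality of
`Δ` reduce to those of `c`, which come from (ii) and (iii).
-/

section Equalizers

variable {C D : Type*} [Category C] [Category D]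

theorem preservesLimitsOfShape_of_isLimit {J K : Type*} [Category J] [Category K]
    [HasLimitsOfShape K D] {F : K ⥤ C ⥤ D} [∀ k, PreservesLimitsOfShape J (F.obj k)]
    {c : Cone F} (hc : IsLimit c) : PreservesLimitsOfShape J c.pt := by
  have : PreservesLimitsOfShape J F.flip :=
    preservesLimitsOfShape_of_evaluation _ _ fun k =>
      preservesLimitsOfShape_of_natIso (flipCompEvaluation F k).symm
  exact preservesLimitsOfShape_of_natIso
    ((hc.conePointUniqueUpToIso (limit.isLimit F)) ≪≫ limitIsoFlipCompLim F).symm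

theorem preservesLimitsOfShape_of_isLimit_fork {J : Type*} [Category J] [HasEqualizers D]
    {F G : C ⥤ D} {α β : F ⟶ G} [PreservesLimitsOfShape J F] [PreservesLimitsOfShape J G]
    {c : Fork α β} (hc : IsLimit c) : PreservesLimitsOfShape J c.pt :=
  have : ∀ k, PreservesLimitsOfShape J ((parallelPair α β).obj k) := by
    rintro (_ | _) <;> assumption
  preservesLimitsOfShape_of_isLimit hc

theorem mono_map_app_of_isLimit_fork {E : Type*} [Category E] [HasEqualizers D]
    {F G K : C ⥤ D} {α β : F ⟶ G} {ι : K ⟶ F} {w : ι ≫ α = ι ≫ β}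
    (hι : IsLimit (Fork.ofι ι w)) (H : D ⥤ E) [PreservesLimitsOfShape WalkingParallelPair H]
    (X : C) : Mono (H.map (ι.app X)) :=
  mono_of_isLimit_fork <| isLimitForkMapOfIsLimit H _ <|
    isLimitForkMapOfIsLimit ((evaluation C D).obj X) w hι

theorem mono_app_of_isLimit_fork [HasEqualizers D] {F G K : C ⥤ D} {α β : F ⟶ G} {ι : K ⟶ F}
    {w : ι ≫ α = ι ≫ β} (hι : IsLimit (Fork.ofι ι w)) (X : C) : Mono (ι.app X) :=
  mono_map_app_of_isLimit_fork hι (𝟭 D) X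

end Equalizers

section Comonad

variable {A B : Type*} [Category A] [Category B] {P : A ⥤ B} {Q : B ⥤ A} {R C : A ⥤ A}
  {r : 𝟭 A ⟶ R} {w : P ⋙ Q ⟶ R} {τ : Q ⟶ Q ⋙ P ⋙ Q} {ωl ωr : P ⋙ Q ⟶ R ⋙ P ⋙ Q}
  {i : C ⟶ P ⋙ Q}

theorem τ_comp_ωl_eq_τ_comp_ωr
    (hτ : ∀ Y : B, τ.app Y ≫ Q.map (P.map (τ.app Y)) = τ.app Y ≫ τ.app (P.obj (Q.obj Y)))
    (hw : ∀ Y : B, τ.app Y ≫ w.app (Q.obj Y) = r.app (Q.obj Y))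
    (hωl : ∀ X : A, ωl.app X = τ.app (P.obj X) ≫ Q.map (P.map (w.app X)))
    (hωr : ∀ X : A, ωr.app X = Q.map (P.map (r.app X))) (Y : B) :
    τ.app Y ≫ ωl.app (Q.obj Y) = τ.app Y ≫ ωr.app (Q.obj Y) := by
  rw [hωl, hωr, ← reassoc_of% hτ, ← Q.map_comp, ← P.map_comp, hw]

theorem w_comp_r_eq_ωl_comp_w
    (hw : ∀ Y : B, τ.app Y ≫ w.app (Q.obj Y) = r.app (Q.obj Y))
    (hωl : ∀ X : A, ωl.app X = τ.app (P.obj X) ≫ Q.map (P.map (w.app X))) (X : A) :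
    w.app X ≫ r.app (R.obj X) = ωl.app X ≫ w.app (R.obj X) := by
  have hr := r.naturality (w.app X)
  have hw' := w.naturality (w.app X)
  dsimp at hr hw'
  rw [hr, ← hw, hωl, Category.assoc, Category.assoc, hw']

theorem w_comp_map_r_eq_ωr_comp_w (hωr : ∀ X : A, ωr.app X = Q.map (P.map (r.app X))) (X : A) :
    w.app X ≫ R.map (r.app X) = ωr.app X ≫ w.app (R.obj X) := by
  rw [hωr]
  exact (w.naturality (r.app X)).symm

theorem τ_comp_map_ωl
    (hτ : ∀ Y : B, τ.app Y ≫ Q.map (P.map (τ.app Y)) = τ.app Y ≫ τ.app (P.obj (Q.obj Y)))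
    (hωl : ∀ X : A, ωl.app X = τ.app (P.obj X) ≫ Q.map (P.map (w.app X))) (X : A) :
    τ.app (P.obj X) ≫ Q.map (P.map (ωl.app X)) = ωl.app X ≫ τ.app (P.obj (R.obj X)) := by
  have hτ' := τ.naturality (P.map (w.app X))
  dsimp at hτ'
  rw [hωl, P.map_comp, Q.map_comp, reassoc_of% hτ, Category.assoc, hτ']

theorem τ_comp_map_ωr (hωr : ∀ X : A, ωr.app X = Q.map (P.map (r.app X))) (X : A) :
    τ.app (P.obj X) ≫ Q.map (P.map (ωr.app X)) = ωr.app X ≫ τ.app (P.obj (R.obj X)) := by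
  rw [hωr]
  exact (τ.naturality (P.map (r.app X))).symm

theorem exists_counit {wr : r ≫ (Functor.whiskerLeft R r : R ⟶ R ⋙ R) =
      r ≫ (Functor.whiskerRight r R : R ⟶ R ⋙ R)} (hr : IsLimit (Fork.ofι r wr))
    (hw : ∀ Y : B, τ.app Y ≫ w.app (Q.obj Y) = r.app (Q.obj Y))
    (hωl : ∀ X : A, ωl.app X = τ.app (P.obj X) ≫ Q.map (P.map (w.app X)))
    (hωr : ∀ X : A, ωr.app X = Q.map (P.map (r.app X))) (wi : i ≫ ωl = i ≫ ωr) :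
    ∃ ε : C ⟶ 𝟭 A, ∀ X : A, ε.app X ≫ r.app X = i.app X ≫ w.app X := by
  have hfork : (i ≫ w) ≫ Functor.whiskerLeft R r = (i ≫ w) ≫ Functor.whiskerRight r R := by
    ext X
    simp only [NatTrans.comp_app, Functor.whiskerLeft_app, Functor.whiskerRight_app,
      Category.assoc, w_comp_r_eq_ωl_comp_w hw hωl, w_comp_map_r_eq_ωr_comp_w hωr]
    rw [reassoc_of% (show i.app X ≫ ωl.app X = i.app X ≫ ωr.app X from congr_app wi X)]
  obtain ⟨ε, hε⟩ := Fork.IsLimit.lift' hr (i ≫ w) hfork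
  exact ⟨ε, fun X => congr_app hε X⟩

theorem existsUnique_coaction [HasEqualizers A] {wi : i ≫ ωl = i ≫ ωr}
    (hi : IsLimit (Fork.ofι i wi))
    (hτ : ∀ Y : B, τ.app Y ≫ Q.map (P.map (τ.app Y)) = τ.app Y ≫ τ.app (P.obj (Q.obj Y)))
    (hw : ∀ Y : B, τ.app Y ≫ w.app (Q.obj Y) = r.app (Q.obj Y))
    (hωl : ∀ X : A, ωl.app X = τ.app (P.obj X) ≫ Q.map (P.map (w.app X)))
    (hωr : ∀ X : A, ωr.app X = Q.map (P.map (r.app X))) :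
    ∃! c : Q ⟶ Q ⋙ C, ∀ Y : B, c.app Y ≫ i.app (Q.obj Y) = τ.app Y := by
  have hfork : τ ≫ Functor.whiskerLeft Q ωl = τ ≫ Functor.whiskerLeft Q ωr := by
    ext Y
    exact τ_comp_ωl_eq_τ_comp_ωr hτ hw hωl hωr Y
  obtain ⟨c, hc⟩ := Fork.IsLimit.lift'
    (isLimitForkMapOfIsLimit ((Functor.whiskeringLeft B A A).obj Q) wi hi) τ hfork
  refine ⟨c, fun Y => congr_app hc Y, fun c' hc' => ?_⟩
  ext Y
  have := mono_app_of_isLimit_fork hi (Q.obj Y)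
  rw [← cancel_mono (i.app (Q.obj Y)), hc']
  exact (congr_app hc Y).symm

theorem exists_comultiplication [HasEqualizers A] {wi : i ≫ ωl = i ≫ ωr}
    (hi : IsLimit (Fork.ofι i wi)) [PreservesLimitsOfShape WalkingParallelPair C]
    (hτ : ∀ Y : B, τ.app Y ≫ Q.map (P.map (τ.app Y)) = τ.app Y ≫ τ.app (P.obj (Q.obj Y)))
    (hωl : ∀ X : A, ωl.app X = τ.app (P.obj X) ≫ Q.map (P.map (w.app X)))
    (hωr : ∀ X : A, ωr.app X = Q.map (P.map (r.app X)))
    {c : Q ⟶ Q ⋙ C} (hc : ∀ Y : B, c.app Y ≫ i.app (Q.obj Y) = τ.app Y) :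
    ∃ δ : C ⟶ C ⋙ C, ∀ X : A, δ.app X ≫ C.map (i.app X) = i.app X ≫ c.app (P.obj X) := by
  have hfork : (i ≫ Functor.whiskerLeft P c) ≫ Functor.whiskerRight ωl C =
      (i ≫ Functor.whiskerLeft P c) ≫ Functor.whiskerRight ωr C := by
    ext X
    have := mono_app_of_isLimit_fork hi (Q.obj (P.obj (R.obj X)))
    rw [← cancel_mono (i.app (Q.obj (P.obj (R.obj X))))]
    simp only [NatTrans.comp_app, Functor.whiskerLeft_app, Functor.whiskerRight_app,
      Category.assoc]
    have hωl_nat := i.naturality (ωl.app X)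
    have hωr_nat := i.naturality (ωr.app X)
    dsimp at hωl_nat hωr_nat
    rw [hωl_nat, hωr_nat, reassoc_of% hc, reassoc_of% hc, τ_comp_map_ωl hτ hωl,
      τ_comp_map_ωr hωr, reassoc_of% (show i.app X ≫ ωl.app X = i.app X ≫ ωr.app X from
        congr_app wi X)]
  obtain ⟨δ, hδ⟩ := Fork.IsLimit.lift'
    (isLimitForkMapOfIsLimit ((Functor.whiskeringRight A A A).obj C) wi hi) _ hfork
  exact ⟨δ, fun X => congr_app hδ X⟩

theorem coaction_counit {ε : C ⟶ 𝟭 A} (hε : ∀ X : A, ε.app X ≫ r.app X = i.app X ≫ w.app X)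
    {c : Q ⟶ Q ⋙ C} (hc : ∀ Y : B, c.app Y ≫ i.app (Q.obj Y) = τ.app Y)
    (hw : ∀ Y : B, τ.app Y ≫ w.app (Q.obj Y) = r.app (Q.obj Y)) [∀ X, Mono (r.app X)] (Y : B) :
    c.app Y ≫ ε.app (Q.obj Y) = 𝟙 (Q.obj Y) := by
  rw [← cancel_mono (r.app (Q.obj Y)), Category.assoc, hε, reassoc_of% hc, hw, Category.id_comp]

theorem coaction_coassoc
    (hτ : ∀ Y : B, τ.app Y ≫ Q.map (P.map (τ.app Y)) = τ.app Y ≫ τ.app (P.obj (Q.obj Y)))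
    {c : Q ⟶ Q ⋙ C} (hc : ∀ Y : B, c.app Y ≫ i.app (Q.obj Y) = τ.app Y)
    {δ : C ⟶ C ⋙ C} (hδ : ∀ X : A, δ.app X ≫ C.map (i.app X) = i.app X ≫ c.app (P.obj X))
    [∀ X, Mono (i.app X)] [∀ X, Mono (C.map (i.app X))] (Y : B) :
    c.app Y ≫ δ.app (Q.obj Y) = c.app Y ≫ C.map (c.app Y) := by
  have hτ_nat := i.naturality (τ.app Y)
  dsimp at hτ_nat
  rw [← cancel_mono (C.map (i.app (Q.obj Y))), Category.assoc, Category.assoc, hδ,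
    reassoc_of% hc, ← C.map_comp, hc, ← cancel_mono (i.app (Q.obj (P.obj (Q.obj Y)))),
    Category.assoc, Category.assoc, hc, hτ_nat, reassoc_of% hc, hτ]

theorem comul_coassoc {c : Q ⟶ Q ⋙ C} {δ : C ⟶ C ⋙ C}
    (hδ : ∀ X : A, δ.app X ≫ C.map (i.app X) = i.app X ≫ c.app (P.obj X))
    (hc_coassoc : ∀ Y : B, c.app Y ≫ δ.app (Q.obj Y) = c.app Y ≫ C.map (c.app Y))
    [∀ X, Mono (C.map (C.map (i.app X)))] (X : A) :
    δ.app X ≫ C.map (δ.app X) = δ.app X ≫ δ.app (C.obj X) := by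
  have hδ_nat := δ.naturality (i.app X)
  dsimp at hδ_nat
  rw [← cancel_mono (C.map (C.map (i.app X))), Category.assoc, Category.assoc, ← hδ_nat,
    ← C.map_comp, hδ, C.map_comp, reassoc_of% hδ, reassoc_of% hδ, hc_coassoc]

theorem comul_counit_left {ε : C ⟶ 𝟭 A} {c : Q ⟶ Q ⋙ C} {δ : C ⟶ C ⋙ C}
    (hδ : ∀ X : A, δ.app X ≫ C.map (i.app X) = i.app X ≫ c.app (P.obj X))
    (hc_counit : ∀ Y : B, c.app Y ≫ ε.app (Q.obj Y) = 𝟙 (Q.obj Y))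
    [∀ X, Mono (i.app X)] (X : A) :
    δ.app X ≫ ε.app (C.obj X) = 𝟙 (C.obj X) := by
  have hε_nat := ε.naturality (i.app X)
  dsimp at hε_nat
  rw [← cancel_mono (i.app X), Category.assoc, ← hε_nat, reassoc_of% hδ, hc_counit,
    Category.comp_id, Category.id_comp]

theorem comul_counit_right (wi : i ≫ ωl = i ≫ ωr)
    (hωl : ∀ X : A, ωl.app X = τ.app (P.obj X) ≫ Q.map (P.map (w.app X)))
    (hωr : ∀ X : A, ωr.app X = Q.map (P.map (r.app X)))
    {ε : C ⟶ 𝟭 A} (hε : ∀ X : A, ε.app X ≫ r.app X = i.app X ≫ w.app X)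
    {c : Q ⟶ Q ⋙ C} (hc : ∀ Y : B, c.app Y ≫ i.app (Q.obj Y) = τ.app Y)
    {δ : C ⟶ C ⋙ C} (hδ : ∀ X : A, δ.app X ≫ C.map (i.app X) = i.app X ≫ c.app (P.obj X))
    [∀ X, Mono (i.app X)] [∀ X, Mono (C.map (r.app X))] (X : A) :
    δ.app X ≫ C.map (ε.app X) = 𝟙 (C.obj X) := by
  have hw_nat := i.naturality (w.app X)
  have hr_nat := i.naturality (r.app X)
  dsimp at hw_nat hr_nat
  rw [← cancel_mono (C.map (r.app X)), Category.assoc, ← C.map_comp, hε, C.map_comp,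
    reassoc_of% hδ, Category.id_comp, ← cancel_mono (i.app (R.obj X)), Category.assoc,
    Category.assoc, hw_nat, reassoc_of% hc, ← hωl, hr_nat, ← hωr]
  exact congr_app wi X

end Comonad

theorem stmt15_general {A B : Type*} [Category A] [Category B]
    [HasEqualizers A]
    (P : A ⥤ B) (Q : B ⥤ A) (Rf : A ⥤ A)
    [PreservesLimitsOfShape WalkingParallelPair P]
    [PreservesLimitsOfShape WalkingParallelPair Q]
    [PreservesLimitsOfShape WalkingParallelPair Rf]
    (r : 𝟭 A ⟶ Rf)
    (w : P ⋙ Q ⟶ Rf) (τ : Q ⟶ Q ⋙ P ⋙ Q)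
    -- (i) `r` and `s` are the equalizers of `(rR, Rr)` and `(sS, Ss)` respectively
    (wr : r ≫ (Functor.whiskerLeft Rf r : Rf ⟶ Rf ⋙ Rf) =
      r ≫ (Functor.whiskerRight r Rf : Rf ⟶ Rf ⋙ Rf))
    (hr : IsLimit (Fork.ofι r wr))
    -- (ii) coassociativity of `τ`
    (hτ : ∀ Y : B, τ.app Y ≫ Q.map (P.map (τ.app Y)) =
      τ.app Y ≫ τ.app (P.obj (Q.obj Y)))
    -- (iii) compatibility of `τ` with `z` and `w`
    (hw : ∀ Y : B, τ.app Y ≫ w.app (Q.obj Y) = r.app (Q.obj Y))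
    -- the natural transformations `ω^l = (QPw)∘(τP)` and `ω^r = QPr`
    (ωl ωr : P ⋙ Q ⟶ Rf ⋙ P ⋙ Q)
    (hωl : ∀ X : A, ωl.app X = τ.app (P.obj X) ≫ Q.map (P.map (w.app X)))
    (hωr : ∀ X : A, ωr.app X = Q.map (P.map (r.app X)))
    -- the equalizer `(C, i)` of `ω^l` and `ω^r`
    (Cf : A ⥤ A) (i : Cf ⟶ P ⋙ Q) (wi : i ≫ ωl = i ≫ ωr)
    (hi : IsLimit (Fork.ofι i wi)) :
    -- `C` preserves equalizers
    Nonempty (PreservesLimitsOfShape WalkingParallelPair Cf) ∧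
    -- `C` carries a comonad structure and `Q` a left `C`-coaction
    ∃ (δ : Cf ⟶ Cf ⋙ Cf) (ε : Cf ⟶ 𝟭 A) (c : Q ⟶ Q ⋙ Cf),
      -- defining equation of the coproduct: `(ii) ∘ Δ = (τP) ∘ i`
      (∀ X : A, δ.app X ≫ Cf.map (i.app X) ≫ i.app (Q.obj (P.obj X)) =
        i.app X ≫ τ.app (P.obj X)) ∧
      -- defining equation of the counit: `r ∘ ε = w ∘ i`
      (∀ X : A, ε.app X ≫ r.app X = i.app X ≫ w.app X) ∧
      -- comonad laws
      (∀ X : A, δ.app X ≫ Cf.map (δ.app X) = δ.app X ≫ δ.app (Cf.obj X)) ∧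
      (∀ X : A, δ.app X ≫ ε.app (Cf.obj X) = 𝟙 (Cf.obj X)) ∧
      (∀ X : A, δ.app X ≫ Cf.map (ε.app X) = 𝟙 (Cf.obj X)) ∧
      -- defining equation of the coaction: `(iQ) ∘ c = τ`
      (∀ Y : B, c.app Y ≫ i.app (Q.obj Y) = τ.app Y) ∧
      -- `c` is the unique such natural transformation
      (∀ c' : Q ⟶ Q ⋙ Cf, (∀ Y : B, c'.app Y ≫ i.app (Q.obj Y) = τ.app Y) → c' = c) ∧
      -- coassociativity and counitality of the coaction
      (∀ Y : B, c.app Y ≫ δ.app (Q.obj Y) = c.app Y ≫ Cf.map (c.app Y)) ∧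
      (∀ Y : B, c.app Y ≫ ε.app (Q.obj Y) = 𝟙 (Q.obj Y)) := by
  have hC : PreservesLimitsOfShape WalkingParallelPair Cf :=
    preservesLimitsOfShape_of_isLimit_fork hi
  have : ∀ X, Mono (i.app X) := mono_app_of_isLimit_fork hi
  have : ∀ X, Mono (r.app X) := mono_app_of_isLimit_fork hr
  have : ∀ X, Mono (Cf.map (i.app X)) := mono_map_app_of_isLimit_fork hi Cf
  have : ∀ X, Mono (Cf.map (Cf.map (i.app X))) := mono_map_app_of_isLimit_fork hi (Cf ⋙ Cf)
  have : ∀ X, Mono (Cf.map (r.app X)) := mono_map_app_of_isLimit_fork hr Cf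
  obtain ⟨ε, hε⟩ := exists_counit hr hw hωl hωr wi
  obtain ⟨c, hc, hc_unique⟩ := existsUnique_coaction hi hτ hw hωl hωr
  obtain ⟨δ, hδ⟩ := exists_comultiplication hi hτ hωl hωr hc
  have hc_coassoc := coaction_coassoc hτ hc hδ
  have hc_counit := coaction_counit hε hc hw
  exact ⟨⟨hC⟩, δ, ε, c, fun X => by rw [reassoc_of% hδ, hc], hε, comul_coassoc hδ hc_coassoc,
    comul_counit_left hδ hc_counit, comul_counit_right wi hωl hωr hε hc hδ, hc, hc_unique,
    hc_coassoc, hc_counit⟩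

/-- From pre-torsor-like data `(P, Q, R, S, r, s, w, z, τ)` between categories with equalizers
(all functors preserving equalizers), the equalizer `C` of `ω^l = (QPw)∘(τP)` and `ω^r = QPr`
carries a comonad structure whose underlying functor preserves equalizers, and `Q` is a left
`C`-comodule functor via the unique `c` with `(iQ)∘c = τ`. -/
theorem stmt15 {A B : Type*} [Category A] [Category B]
    [HasEqualizers A] [HasEqualizers B]
    (P : A ⥤ B) (Q : B ⥤ A) (Rf : A ⥤ A) (S : B ⥤ B)
    [PreservesLimitsOfShape WalkingParallelPair P]
    [PreservesLimitsOfShape WalkingParallelPair Q]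
    [PreservesLimitsOfShape WalkingParallelPair Rf]
    [PreservesLimitsOfShape WalkingParallelPair S]
    (r : 𝟭 A ⟶ Rf) (s : 𝟭 B ⟶ S)
    (w : P ⋙ Q ⟶ Rf) (z : Q ⋙ P ⟶ S) (τ : Q ⟶ Q ⋙ P ⋙ Q)
    -- (i) `r` and `s` are the equalizers of `(rR, Rr)` and `(sS, Ss)` respectively
    (wr : r ≫ (Functor.whiskerLeft Rf r : Rf ⟶ Rf ⋙ Rf) =
      r ≫ (Functor.whiskerRight r Rf : Rf ⟶ Rf ⋙ Rf))
    (hr : IsLimit (Fork.ofι r wr))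
    (ws : s ≫ (Functor.whiskerLeft S s : S ⟶ S ⋙ S) =
      s ≫ (Functor.whiskerRight s S : S ⟶ S ⋙ S))
    (hs : IsLimit (Fork.ofι s ws))
    -- (ii) coassociativity of `τ`
    (hτ : ∀ Y : B, τ.app Y ≫ Q.map (P.map (τ.app Y)) =
      τ.app Y ≫ τ.app (P.obj (Q.obj Y)))
    -- (iii) compatibility of `τ` with `z` and `w`
    (hz : ∀ Y : B, τ.app Y ≫ Q.map (z.app Y) = Q.map (s.app Y))
    (hw : ∀ Y : B, τ.app Y ≫ w.app (Q.obj Y) = r.app (Q.obj Y))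
    -- the natural transformations `ω^l = (QPw)∘(τP)` and `ω^r = QPr`
    (ωl ωr : P ⋙ Q ⟶ Rf ⋙ P ⋙ Q)
    (hωl : ∀ X : A, ωl.app X = τ.app (P.obj X) ≫ Q.map (P.map (w.app X)))
    (hωr : ∀ X : A, ωr.app X = Q.map (P.map (r.app X)))
    -- the equalizer `(C, i)` of `ω^l` and `ω^r`
    (Cf : A ⥤ A) (i : Cf ⟶ P ⋙ Q) (wi : i ≫ ωl = i ≫ ωr)
    (hi : IsLimit (Fork.ofι i wi)) :
    -- `C` preserves equalizers
    Nonempty (PreservesLimitsOfShape WalkingParallelPair Cf) ∧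
    -- `C` carries a comonad structure and `Q` a left `C`-coaction
    ∃ (δ : Cf ⟶ Cf ⋙ Cf) (ε : Cf ⟶ 𝟭 A) (c : Q ⟶ Q ⋙ Cf),
      -- defining equation of the coproduct: `(ii) ∘ Δ = (τP) ∘ i`
      (∀ X : A, δ.app X ≫ Cf.map (i.app X) ≫ i.app (Q.obj (P.obj X)) =
        i.app X ≫ τ.app (P.obj X)) ∧
      -- defining equation of the counit: `r ∘ ε = w ∘ i`
      (∀ X : A, ε.app X ≫ r.app X = i.app X ≫ w.app X) ∧
      -- comonad laws
      (∀ X : A, δ.app X ≫ Cf.map (δ.app X) = δ.app X ≫ δ.app (Cf.obj X)) ∧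
      (∀ X : A, δ.app X ≫ ε.app (Cf.obj X) = 𝟙 (Cf.obj X)) ∧
      (∀ X : A, δ.app X ≫ Cf.map (ε.app X) = 𝟙 (Cf.obj X)) ∧
      -- defining equation of the coaction: `(iQ) ∘ c = τ`
      (∀ Y : B, c.app Y ≫ i.app (Q.obj Y) = τ.app Y) ∧
      -- `c` is the unique such natural transformation
      (∀ c' : Q ⟶ Q ⋙ Cf, (∀ Y : B, c'.app Y ≫ i.app (Q.obj Y) = τ.app Y) → c' = c) ∧
      -- coassociativity and counitality of the coaction
      (∀ Y : B, c.app Y ≫ δ.app (Q.obj Y) = c.app Y ≫ Cf.map (c.app Y)) ∧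
      (∀ Y : B, c.app Y ≫ ε.app (Q.obj Y) = 𝟙 (Q.obj Y)) :=
  stmt15_general P Q Rf r w τ wr hr hτ hw ωl ωr hωl hωr Cf i wi hi
end

section
/- In the setting of the previous construction (categories A, B with equalizers; equalizer-preserving functors P, Q, R, S with r, s, w, z, τ satisfying conditions (i)–(iii)), Q is a C-D bicomodule functor: the left C-coaction c : Q → CQ and the right D-coaction d : Q → QD (defined by (Qj) ∘ d = τ, where D is the equalizer of θ^l := (zPQ) ∘ (Pτ) and θ^r := sPQ with inclusion j : D → PQ) satisfy (Cd) ∘ c = (cD) ∘ d. -/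
open CategoryTheory CategoryTheory.Limits

/-!
After composing with `i_{QD}` and then `QPQj`, both sides of `(Cd) ∘ c = (cD) ∘ d` become
`τ_{PQ} ∘ τ`: the left side by the defining equations of `c` and `d` and coassociativity
`(QPτ) ∘ τ = τ_{PQ} ∘ τ`, the right side by naturality of `τ`. Both maps are monic:
`i` is an equalizer, and `QPQj` is the image of the equalizer `j` under the
equalizer-preserving functor `QPQ`.
-/

noncomputable def isLimitForkOfιApp {C D : Type*} [Category C] [Category D] [HasEqualizers D]
    {F G H : C ⥤ D} {f g : F ⟶ G} {ι : H ⟶ F} (w : ι ≫ f = ι ≫ g)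
    (h : IsLimit (Fork.ofι ι w)) (X : C) :
    IsLimit (Fork.ofι (ι.app X) (congr_app w X) : Fork (f.app X) (g.app X)) :=
  isLimitForkMapOfIsLimit ((evaluation C D).obj X) w h

section Bicomodule

variable {A B : Type*} [Category A] [Category B] {P : A ⥤ B} {Q : B ⥤ A}
  {τ : Q ⟶ Q ⋙ P ⋙ Q}

theorem coaction_comp_map_comp_app {Cf : A ⥤ A} {i : Cf ⟶ P ⋙ Q} {c : Q ⟶ Q ⋙ Cf}
    (hc : ∀ Y : B, c.app Y ≫ i.app (Q.obj Y) = τ.app Y) {Y : B} {X : A}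
    (f : Q.obj Y ⟶ X) : c.app Y ≫ Cf.map f ≫ i.app X = τ.app Y ≫ Q.map (P.map f) := by
  rw [← hc Y, Category.assoc]
  exact congrArg (c.app Y ≫ ·) (i.naturality f)

theorem leftCoaction_comp_map_rightCoaction_app
    (hτ : ∀ Y : B, τ.app Y ≫ Q.map (P.map (τ.app Y)) = τ.app Y ≫ τ.app (P.obj (Q.obj Y)))
    {Cf : A ⥤ A} {i : Cf ⟶ P ⋙ Q} {c : Q ⟶ Q ⋙ Cf}
    (hc : ∀ Y : B, c.app Y ≫ i.app (Q.obj Y) = τ.app Y)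
    {Df : B ⥤ B} {j : Df ⟶ Q ⋙ P} {d : Q ⟶ Df ⋙ Q}
    (hd : ∀ Y : B, d.app Y ≫ Q.map (j.app Y) = τ.app Y) (Y : B)
    [Mono (i.app (Q.obj (Df.obj Y)))] [Mono (Q.map (P.map (Q.map (j.app Y))))] :
    c.app Y ≫ Cf.map (d.app Y) = d.app Y ≫ c.app (Df.obj Y) := by
  rw [← cancel_mono (i.app (Q.obj (Df.obj Y))), ← cancel_mono (Q.map (P.map (Q.map (j.app Y))))]
  calc ((c.app Y ≫ Cf.map (d.app Y)) ≫ i.app _) ≫ Q.map (P.map (Q.map (j.app Y)))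
      = τ.app Y ≫ Q.map (P.map (d.app Y ≫ Q.map (j.app Y))) := by
        rw [Category.assoc (c.app Y), coaction_comp_map_comp_app hc, Category.assoc, ← Q.map_comp,
          ← P.map_comp]
    _ = τ.app Y ≫ τ.app (P.obj (Q.obj Y)) := by rw [hd Y, hτ Y]
    _ = d.app Y ≫ τ.app (Df.obj Y) ≫ Q.map (P.map (Q.map (j.app Y))) := by
        rw [← hd Y, Category.assoc]
        exact congrArg (d.app Y ≫ ·) (τ.naturality (j.app Y))
    _ = ((d.app Y ≫ c.app (Df.obj Y)) ≫ i.app _) ≫ Q.map (P.map (Q.map (j.app Y))) := by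
        rw [Category.assoc, Category.assoc, reassoc_of% (hc (Df.obj Y))]

end Bicomodule

theorem stmt16_general {A B : Type*} [Category A] [Category B]
    [HasEqualizers A] [HasEqualizers B]
    (P : A ⥤ B) (Q : B ⥤ A) (Rf : A ⥤ A) (S : B ⥤ B)
    [PreservesLimitsOfShape WalkingParallelPair P]
    [PreservesLimitsOfShape WalkingParallelPair Q]
    (τ : Q ⟶ Q ⋙ P ⋙ Q)
    (hτ : ∀ Y : B, τ.app Y ≫ Q.map (P.map (τ.app Y)) =
      τ.app Y ≫ τ.app (P.obj (Q.obj Y)))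
    -- the equalizer `(C, i)` of `ω^l = (QPw)∘(τP)` and `ω^r = QPr`
    (ωl ωr : P ⋙ Q ⟶ Rf ⋙ P ⋙ Q)
    (Cf : A ⥤ A) (i : Cf ⟶ P ⋙ Q) (wi : i ≫ ωl = i ≫ ωr)
    (hi : IsLimit (Fork.ofι i wi))
    -- the equalizer `(D, j)` of `θ^l = (zPQ)∘(Pτ)` and `θ^r = sPQ`
    (θl θr : Q ⋙ P ⟶ Q ⋙ P ⋙ S)
    (Df : B ⥤ B) (j : Df ⟶ Q ⋙ P) (wj : j ≫ θl = j ≫ θr)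
    (hj : IsLimit (Fork.ofι j wj))
    -- the left `C`-coaction `c` and the right `D`-coaction `d` on `Q`
    (c : Q ⟶ Q ⋙ Cf) (hc : ∀ Y : B, c.app Y ≫ i.app (Q.obj Y) = τ.app Y)
    (d : Q ⟶ Df ⋙ Q) (hd : ∀ Y : B, d.app Y ≫ Q.map (j.app Y) = τ.app Y) :
    -- `Q` is a `C`-`D` bicomodule functor: `(Cd)∘c = (cD)∘d`
    ∀ Y : B, c.app Y ≫ Cf.map (d.app Y) = d.app Y ≫ c.app (Df.obj Y) := by
  intro Y
  have : Mono (i.app (Q.obj (Df.obj Y))) := mono_of_isLimit_fork (isLimitForkOfιApp wi hi _)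
  have : Mono (Q.map (P.map (Q.map (j.app Y)))) :=
    mono_of_isLimit_fork (isLimitForkMapOfIsLimit (Q ⋙ P ⋙ Q) _ (isLimitForkOfιApp wj hj Y))
  exact leftCoaction_comp_map_rightCoaction_app hτ hc hd Y

/-- In the pre-torsor setting, `Q` is a `C`-`D` bicomodule functor: the left `C`-coaction `c`
(with `(iQ)∘c = τ`) and the right `D`-coaction `d` (with `(Qj)∘d = τ`) satisfy
`(Cd)∘c = (cD)∘d`. -/
theorem stmt16 {A B : Type*} [Category A] [Category B]
    [HasEqualizers A] [HasEqualizers B]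
    (P : A ⥤ B) (Q : B ⥤ A) (Rf : A ⥤ A) (S : B ⥤ B)
    [PreservesLimitsOfShape WalkingParallelPair P]
    [PreservesLimitsOfShape WalkingParallelPair Q]
    [PreservesLimitsOfShape WalkingParallelPair Rf]
    [PreservesLimitsOfShape WalkingParallelPair S]
    (r : 𝟭 A ⟶ Rf) (s : 𝟭 B ⟶ S)
    (w : P ⋙ Q ⟶ Rf) (z : Q ⋙ P ⟶ S) (τ : Q ⟶ Q ⋙ P ⋙ Q)
    (wr : r ≫ (Functor.whiskerLeft Rf r : Rf ⟶ Rf ⋙ Rf) =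
      r ≫ (Functor.whiskerRight r Rf : Rf ⟶ Rf ⋙ Rf))
    (hr : IsLimit (Fork.ofι r wr))
    (ws : s ≫ (Functor.whiskerLeft S s : S ⟶ S ⋙ S) =
      s ≫ (Functor.whiskerRight s S : S ⟶ S ⋙ S))
    (hs : IsLimit (Fork.ofι s ws))
    (hτ : ∀ Y : B, τ.app Y ≫ Q.map (P.map (τ.app Y)) =
      τ.app Y ≫ τ.app (P.obj (Q.obj Y)))
    (hz : ∀ Y : B, τ.app Y ≫ Q.map (z.app Y) = Q.map (s.app Y))
    (hw : ∀ Y : B, τ.app Y ≫ w.app (Q.obj Y) = r.app (Q.obj Y))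
    -- the equalizer `(C, i)` of `ω^l = (QPw)∘(τP)` and `ω^r = QPr`
    (ωl ωr : P ⋙ Q ⟶ Rf ⋙ P ⋙ Q)
    (hωl : ∀ X : A, ωl.app X = τ.app (P.obj X) ≫ Q.map (P.map (w.app X)))
    (hωr : ∀ X : A, ωr.app X = Q.map (P.map (r.app X)))
    (Cf : A ⥤ A) (i : Cf ⟶ P ⋙ Q) (wi : i ≫ ωl = i ≫ ωr)
    (hi : IsLimit (Fork.ofι i wi))
    -- the equalizer `(D, j)` of `θ^l = (zPQ)∘(Pτ)` and `θ^r = sPQ`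
    (θl θr : Q ⋙ P ⟶ Q ⋙ P ⋙ S)
    (hθl : ∀ Y : B, θl.app Y = P.map (τ.app Y) ≫ z.app (P.obj (Q.obj Y)))
    (hθr : ∀ Y : B, θr.app Y = s.app (P.obj (Q.obj Y)))
    (Df : B ⥤ B) (j : Df ⟶ Q ⋙ P) (wj : j ≫ θl = j ≫ θr)
    (hj : IsLimit (Fork.ofι j wj))
    -- the left `C`-coaction `c` and the right `D`-coaction `d` on `Q`
    (c : Q ⟶ Q ⋙ Cf) (hc : ∀ Y : B, c.app Y ≫ i.app (Q.obj Y) = τ.app Y)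
    (d : Q ⟶ Df ⋙ Q) (hd : ∀ Y : B, d.app Y ≫ Q.map (j.app Y) = τ.app Y) :
    -- `Q` is a `C`-`D` bicomodule functor: `(Cd)∘c = (cD)∘d`
    ∀ Y : B, c.app Y ≫ Cf.map (d.app Y) = d.app Y ≫ c.app (Df.obj Y) :=
  stmt16_general P Q Rf S τ hτ ωl ωr Cf i wi hi θl θr Df j wj hj c hc d hd
end
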